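/- arXiv:2210.07847 — 6 statements merged into one kernel-verified Lean document; each statement's English description precedes it below -/
import Mathlib

section
/- For every C > 0 and A > 0, the integral of 1/(l₁² l₂²) over the region {l ∈ ℝ² : A ≤ ‖l‖ ≤ t, |l₁ l₂| ≥ C} is asymptotically equivalent to (8/C)·log t as t → ∞. -/
/-!
Sandwich the region between squares. Writing `Q s = {|x| ≤ s, |y| ≤ s, C ≤ |xy|}`, the region
for radius `t` lies in `Q t` and contains `Q (t / √2) \ Q A`. The integral over `Q s` is computed
exactly by Fubini: the slice at `x` is `C / |x| ≤ |y| ≤ s`, contributing `2 / (C|x|) - 2 / (s x²)`,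
and integrating this over `C / s ≤ |x| ≤ s` produces `(8 / C) log s + O(1)`. Hence the integral is
`(8 / C) log t + O(1)`.
-/

open MeasureTheory Filter Real Set

theorem isEquivalent_of_le_add_of_add_le {α : Type*} {l : Filter α} {f g : α → ℝ} {a b : ℝ}
    (hg : Tendsto g l atTop) (hlo : ∀ᶠ x in l, g x + a ≤ f x) (hhi : ∀ᶠ x in l, f x ≤ g x + b) :
    Asymptotics.IsEquivalent l f g := by
  have hbdd : (f - g) =O[l] (fun _ => (1 : ℝ)) := by
    refine Asymptotics.IsBigO.of_bound (max |a| |b|) ?_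
    filter_upwards [hlo, hhi] with x hxa hxb
    rw [norm_one, mul_one, Pi.sub_apply, Real.norm_eq_abs, abs_le]
    constructor <;>
      linarith [le_abs_self b, neg_abs_le a, le_max_left |a| |b|, le_max_right |a| |b|]
  exact hbdd.trans_isLittleO ((Asymptotics.isLittleO_one_left_iff ℝ).2
    (tendsto_abs_atTop_atTop.comp hg))

theorem norm_le_sqrt_two_mul_of_abs_le {l : EuclideanSpace ℝ (Fin 2)} {r : ℝ} (h0 : |l 0| ≤ r)
    (h1 : |l 1| ≤ r) : ‖l‖ ≤ √2 * r := by
  have hr : 0 ≤ r := (abs_nonneg _).trans h0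
  rw [EuclideanSpace.norm_eq, Fin.sum_univ_two, Real.norm_eq_abs, Real.norm_eq_abs,
    ← sqrt_sq hr, ← sqrt_mul zero_le_two]
  gcongr
  nlinarith [abs_nonneg (l 0), abs_nonneg (l 1)]

theorem integral_indicator_Icc_comp_abs (g : ℝ → ℝ) {a b : ℝ} (ha : 0 < a) (hab : a ≤ b) :
    ∫ y, (Icc a b).indicator g |y| = 2 * ∫ y in a..b, g y := by
  have hIoi : Ioi 0 ∩ Icc a b = Icc a b := inter_eq_right.2 fun y hy => ha.trans_le hy.1
  rw [integral_comp_abs (f := (Icc a b).indicator g), setIntegral_indicator measurableSet_Icc,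
    hIoi, integral_Icc_eq_integral_Ioc, intervalIntegral.integral_of_le hab]

theorem integral_one_div_sq_of_pos {a b : ℝ} (ha : 0 < a) (hab : a ≤ b) :
    ∫ u in a..b, 1 / u ^ 2 = 1 / a - 1 / b := by
  have hpos : ∀ u ∈ uIcc a b, 0 < u := fun u hu => ha.trans_le (uIcc_of_le hab ▸ hu).1
  rw [intervalIntegral.integral_eq_sub_of_hasDerivAt (f := fun u => -u⁻¹)]
  · simp only [one_div]; ring
  · intro u hu
    simpa [one_div] using (hasDerivAt_inv (hpos u hu).ne').fun_neg
  · exact (continuousOn_const.div (continuousOn_pow 2) fun u hu =>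
      (pow_pos (hpos u hu) 2).ne').intervalIntegrable

def squareOutsideHyperbola (C s : ℝ) : Set (ℝ × ℝ) :=
  {p | C ≤ |p.1 * p.2| ∧ |p.1| ≤ s ∧ |p.2| ≤ s}

theorem measurableSet_squareOutsideHyperbola (C s : ℝ) :
    MeasurableSet (squareOutsideHyperbola C s) := by
  unfold squareOutsideHyperbola; measurability

theorem integrableOn_squareOutsideHyperbola {C : ℝ} (hC : 0 < C) (s : ℝ) :
    IntegrableOn (fun p : ℝ × ℝ => 1 / (p.1 ^ 2 * p.2 ^ 2)) (squareOutsideHyperbola C s) := by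
  have hbdd : Bornology.IsBounded (squareOutsideHyperbola C s) :=
    (Metric.isBounded_closedBall (x := 0) (r := s)).subset fun p hp => by
      simpa [Prod.norm_def] using And.intro hp.2.1 hp.2.2
  refine Measure.integrableOn_of_bounded (M := 1 / C ^ 2) hbdd.measure_lt_top.ne
    (Measurable.aestronglyMeasurable (by fun_prop)) ?_
  filter_upwards [ae_restrict_mem (measurableSet_squareOutsideHyperbola C s)] with p hp
  have hCp : C ^ 2 ≤ p.1 ^ 2 * p.2 ^ 2 := by
    rw [← mul_pow, ← sq_abs (p.1 * p.2)]; gcongr; exact hp.1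
  rw [norm_of_nonneg (by positivity)]
  exact one_div_le_one_div_of_le (by positivity) hCp

theorem integral_indicator_squareOutsideHyperbola_slice {C s : ℝ} (hC : 0 < C) (hs : 0 < s)
    (x : ℝ) :
    ∫ y, (squareOutsideHyperbola C s).indicator (fun p => 1 / (p.1 ^ 2 * p.2 ^ 2)) (x, y) =
      (Icc (C / s) s).indicator (fun u => 2 / C * (1 / u) - 2 / s * (1 / u ^ 2)) |x| := by
  by_cases hx : |x| ∈ Icc (C / s) s
  · have hx0 : 0 < |x| := (div_pos hC hs).trans_le hx.1
    have hCx : C / |x| ≤ s := by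
      rw [div_le_iff₀ hx0]; have := (div_le_iff₀ hs).1 hx.1; linarith
    have hslice (y : ℝ) : (squareOutsideHyperbola C s).indicator
        (fun p => 1 / (p.1 ^ 2 * p.2 ^ 2)) (x, y) =
        (Icc (C / |x|) s).indicator (fun v => 1 / |x| ^ 2 * (1 / v ^ 2)) |y| := by
      simp only [indicator, squareOutsideHyperbola, mem_ofPred_eq, mem_Icc,
        abs_mul, div_le_iff₀ hx0, hx.2, true_and, sq_abs, one_div_mul_one_div, mul_comm |y|]
    simp_rw [hslice]
    rw [integral_indicator_Icc_comp_abs _ (div_pos hC hx0) hCx,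
      intervalIntegral.integral_const_mul, integral_one_div_sq_of_pos (div_pos hC hx0) hCx,
      indicator_of_mem hx]
    field_simp
  · have hempty : ∀ y, (x, y) ∉ squareOutsideHyperbola C s := by
      rintro y ⟨hCxy, hxs, hys⟩
      refine hx ⟨(div_le_iff₀ hs).2 ?_, hxs⟩
      calc C ≤ |x| * |y| := (abs_mul x y).symm ▸ hCxy
        _ ≤ |x| * s := by gcongr
    simp [indicator_of_notMem (hempty _), indicator_of_notMem hx]

theorem integral_squareOutsideHyperbola {C s : ℝ} (hC : 0 < C) (hs : √C ≤ s) :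
    ∫ p in squareOutsideHyperbola C s, 1 / (p.1 ^ 2 * p.2 ^ 2) =
      8 / C * log s - 4 * (log C + 1) / C + 4 / s ^ 2 := by
  have hs0 : 0 < s := (sqrt_pos.2 hC).trans_le hs
  have ha0 : 0 < C / s := div_pos hC hs0
  have has : C / s ≤ s := by
    rw [div_le_iff₀ hs0, ← sq]; exact (sqrt_le_iff.1 hs).2
  have hint := (integrable_indicator_iff (measurableSet_squareOutsideHyperbola C s)).2
    (integrableOn_squareOutsideHyperbola hC s)
  rw [Measure.volume_eq_prod] at hint
  rw [← integral_indicator (measurableSet_squareOutsideHyperbola C s), Measure.volume_eq_prod,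
    integral_prod _ hint]
  simp_rw [integral_indicator_squareOutsideHyperbola_slice hC hs0]
  have hpos : ∀ u ∈ uIcc (C / s) s, u ≠ 0 := fun u hu => (ha0.trans_le (uIcc_of_le has ▸ hu).1).ne'
  rw [integral_indicator_Icc_comp_abs _ ha0 has, intervalIntegral.integral_sub,
    intervalIntegral.integral_const_mul, intervalIntegral.integral_const_mul,
    integral_one_div_of_pos ha0 hs0, integral_one_div_sq_of_pos ha0 has,
    div_div_eq_mul_div, log_div (by positivity) hC.ne', log_mul hs0.ne' hs0.ne']
  · field_simp; ring
  · exact (intervalIntegral.intervalIntegrable_one_div hpos continuousOn_id).const_mul _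
  · exact (intervalIntegral.intervalIntegrable_one_div (fun u hu => pow_ne_zero 2 (hpos u hu))
      (continuousOn_pow 2)).const_mul _

theorem le_integral_squareOutsideHyperbola {C s : ℝ} (hC : 0 < C) (hs : √C ≤ s) :
    8 / C * log s - 4 * (log C + 1) / C ≤
      ∫ p in squareOutsideHyperbola C s, 1 / (p.1 ^ 2 * p.2 ^ 2) := by
  rw [integral_squareOutsideHyperbola hC hs]
  have : 0 ≤ 4 / s ^ 2 := by positivity
  linarith

theorem integral_squareOutsideHyperbola_le {C s : ℝ} (hC : 0 < C) (hs : √C ≤ s) :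
    ∫ p in squareOutsideHyperbola C s, 1 / (p.1 ^ 2 * p.2 ^ 2) ≤
      8 / C * log s - 4 * (log C + 1) / C + 4 / C := by
  rw [integral_squareOutsideHyperbola hC hs]
  have : 4 / s ^ 2 ≤ 4 / C := by gcongr; exact (sqrt_le_iff.1 hs).2
  linarith

def euclideanSpaceFinTwoEquivProd : EuclideanSpace ℝ (Fin 2) ≃ᵐ ℝ × ℝ :=
  (MeasurableEquiv.toLp 2 (Fin 2 → ℝ)).symm.trans MeasurableEquiv.finTwoArrow

theorem measurePreserving_euclideanSpaceFinTwoEquivProd :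
    MeasurePreserving euclideanSpaceFinTwoEquivProd :=
  (volume_preserving_finTwoArrow ℝ).comp (PiLp.volume_preserving_ofLp (Fin 2))

local notation "e₂" => euclideanSpaceFinTwoEquivProd

theorem setIntegral_preimage_squareOutsideHyperbola (C s : ℝ) :
    ∫ l in e₂ ⁻¹' squareOutsideHyperbola C s, 1 / (l 0 ^ 2 * l 1 ^ 2) =
      ∫ p in squareOutsideHyperbola C s, 1 / (p.1 ^ 2 * p.2 ^ 2) :=
  measurePreserving_euclideanSpaceFinTwoEquivProd.setIntegral_preimage_emb
    euclideanSpaceFinTwoEquivProd.measurableEmbedding (fun p : ℝ × ℝ => 1 / (p.1 ^ 2 * p.2 ^ 2)) _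

theorem integrableOn_preimage_squareOutsideHyperbola {C : ℝ} (hC : 0 < C) (s : ℝ) :
    IntegrableOn (fun l : EuclideanSpace ℝ (Fin 2) => 1 / (l 0 ^ 2 * l 1 ^ 2))
      (e₂ ⁻¹' squareOutsideHyperbola C s) :=
  (measurePreserving_euclideanSpaceFinTwoEquivProd.integrableOn_comp_preimage
    euclideanSpaceFinTwoEquivProd.measurableEmbedding).2 (integrableOn_squareOutsideHyperbola hC s)

def annulusOutsideHyperbola (C A t : ℝ) : Set (EuclideanSpace ℝ (Fin 2)) :=
  {l | A ≤ ‖l‖ ∧ ‖l‖ ≤ t ∧ C ≤ |l 0 * l 1|}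

theorem annulusOutsideHyperbola_subset (C A t : ℝ) :
    annulusOutsideHyperbola C A t ⊆ e₂ ⁻¹' squareOutsideHyperbola C t :=
  fun l ⟨_, hlt, hC⟩ => ⟨hC, (PiLp.norm_apply_le l 0).trans hlt, (PiLp.norm_apply_le l 1).trans hlt⟩

theorem sdiff_subset_annulusOutsideHyperbola (C A t : ℝ) :
    e₂ ⁻¹' squareOutsideHyperbola C (t / √2) \ e₂ ⁻¹' squareOutsideHyperbola C A ⊆
      annulusOutsideHyperbola C A t := by
  rintro l ⟨⟨hC, h0, h1⟩, hA⟩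
  refine ⟨?_, ?_, hC⟩
  · by_contra! hlA
    exact hA ⟨hC, (PiLp.norm_apply_le l 0).trans hlA.le, (PiLp.norm_apply_le l 1).trans hlA.le⟩
  · calc ‖l‖ ≤ √2 * (t / √2) := norm_le_sqrt_two_mul_of_abs_le h0 h1
      _ = t := mul_div_cancel₀ t (by positivity)

theorem setIntegral_annulusOutsideHyperbola_le {C : ℝ} (hC : 0 < C) (A t : ℝ) :
    ∫ l in annulusOutsideHyperbola C A t, 1 / (l 0 ^ 2 * l 1 ^ 2) ≤
      ∫ p in squareOutsideHyperbola C t, 1 / (p.1 ^ 2 * p.2 ^ 2) := by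
  rw [← setIntegral_preimage_squareOutsideHyperbola]
  exact setIntegral_mono_set (integrableOn_preimage_squareOutsideHyperbola hC t)
    (.of_forall fun l => by positivity) (annulusOutsideHyperbola_subset C A t).eventuallyLE

theorem sub_le_setIntegral_annulusOutsideHyperbola {C A t : ℝ} (hC : 0 < C) (ht : √2 * A ≤ t) :
    (∫ p in squareOutsideHyperbola C (t / √2), 1 / (p.1 ^ 2 * p.2 ^ 2)) -
        ∫ p in squareOutsideHyperbola C A, 1 / (p.1 ^ 2 * p.2 ^ 2) ≤
      ∫ l in annulusOutsideHyperbola C A t, 1 / (l 0 ^ 2 * l 1 ^ 2) := by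
  have hAt : A ≤ t / √2 := by rw [le_div_iff₀ (by positivity)]; linarith
  have hmono : e₂ ⁻¹' squareOutsideHyperbola C A ⊆ e₂ ⁻¹' squareOutsideHyperbola C (t / √2) :=
    fun l ⟨hC, h0, h1⟩ => ⟨hC, h0.trans hAt, h1.trans hAt⟩
  rw [← setIntegral_preimage_squareOutsideHyperbola, ← setIntegral_preimage_squareOutsideHyperbola,
    ← setIntegral_sdiff ((measurableSet_squareOutsideHyperbola C A).preimage
      euclideanSpaceFinTwoEquivProd.measurable)
      (integrableOn_preimage_squareOutsideHyperbola hC _) hmono]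
  exact setIntegral_mono_set
    ((integrableOn_preimage_squareOutsideHyperbola hC t).mono_set
      (annulusOutsideHyperbola_subset C A t))
    (.of_forall fun l => by positivity) (sdiff_subset_annulusOutsideHyperbola C A t).eventuallyLE

theorem integral_inv_sq_sq_asymp_general (C A : ℝ) (hC : 0 < C) :
    Tendsto (fun t : ℝ =>
      (∫ l in {l : EuclideanSpace ℝ (Fin 2) | A ≤ ‖l‖ ∧ ‖l‖ ≤ t ∧ C ≤ |l 0 * l 1|},
        1 / ((l 0) ^ 2 * (l 1) ^ 2)) / (8 / C * Real.log t)) atTop (nhds 1) := by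
  set K := 4 * (log C + 1) / C
  set c₀ := ∫ p in squareOutsideHyperbola C A, 1 / (p.1 ^ 2 * p.2 ^ 2)
  have hlog : Tendsto (fun t => 8 / C * log t) atTop atTop :=
    tendsto_log_atTop.const_mul_atTop (by positivity)
  refine (Asymptotics.isEquivalent_iff_tendsto_one (hlog.eventually_ne_atTop 0)).1
    (isEquivalent_of_le_add_of_add_le hlog (a := -K - 8 / C * log √2 - c₀) (b := -K + 4 / C)
      ?_ ?_)
  · filter_upwards [eventually_ge_atTop (√2 * max A √C)] with t ht
    have ht0 : 0 < t := lt_of_lt_of_le (by positivity) ht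
    have hAt : √2 * A ≤ t := (mul_le_mul_of_nonneg_left (le_max_left _ _) (by positivity)).trans ht
    have hCt : √C ≤ t / √2 := (le_div_iff₀' (by positivity)).2
      ((mul_le_mul_of_nonneg_left (le_max_right _ _) (by positivity)).trans ht)
    calc 8 / C * log t + (-K - 8 / C * log √2 - c₀) = 8 / C * log (t / √2) - K - c₀ := by
          rw [log_div ht0.ne' (by positivity)]; ring
      _ ≤ (∫ p in squareOutsideHyperbola C (t / √2), 1 / (p.1 ^ 2 * p.2 ^ 2)) - c₀ := by
          gcongr; exact le_integral_squareOutsideHyperbola hC hCt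
      _ ≤ _ := sub_le_setIntegral_annulusOutsideHyperbola hC hAt
  · filter_upwards [eventually_ge_atTop √C] with t ht
    calc _ ≤ ∫ p in squareOutsideHyperbola C t, 1 / (p.1 ^ 2 * p.2 ^ 2) :=
          setIntegral_annulusOutsideHyperbola_le hC A t
      _ ≤ 8 / C * log t - K + 4 / C := integral_squareOutsideHyperbola_le hC ht
      _ = 8 / C * log t + (-K + 4 / C) := by ring

/-- For every `C > 0` and `A > 0`, the integral of `1/(l₁² l₂²)` over
`{l ∈ ℝ² : A ≤ ‖l‖ ≤ t, |l₁ l₂| ≥ C}` is asymptotically equivalent to `(8/C)·log t`. -/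
theorem integral_inv_sq_sq_asymp (C A : ℝ) (hC : 0 < C) (hA : 0 < A) :
    Tendsto (fun t : ℝ =>
      (∫ l in {l : EuclideanSpace ℝ (Fin 2) | A ≤ ‖l‖ ∧ ‖l‖ ≤ t ∧ C ≤ |l 0 * l 1|},
        1 / ((l 0) ^ 2 * (l 1) ^ 2)) / (8 / C * Real.log t)) atTop (nhds 1) :=
  integral_inv_sq_sq_asymp_general C A hC
end

section
/- For every C > 0 and A > 0, the integral of 1/(l₁³ l₂²) over the region {l ∈ ℝ² : A ≤ ‖l‖ ≤ T, l₁ > 0, l₂ > 0, l₁ l₂ ≥ C} is O(T) as T → ∞. -/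
/-!
On `x y ≥ C` we have `1 / (x³ y²) = (x y)^(-3/2) x^(-3/2) y^(-1/2) ≤ C^(-3/2) x^(-3/2) y^(-1/2)`,
and since `y ≤ ‖l‖ ≤ T` forces `x ≥ C / T`, the region lies in the box `[C / T, ∞) × (0, T]`.
The majorant factorises over the box: `∫_{C/T}^∞ x^(-3/2) = 2 (T / C)^(1/2)` and
`∫_0^T y^(-1/2) = 2 T^(1/2)`, so the integral is at most `4 T / C²`.
-/

open MeasureTheory Filter Real Asymptotics Set

theorem setIntegral_euclideanSpace_fin_two {E : Type*} [NormedAddCommGroup E] [NormedSpace ℝ E]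
    (f : ℝ → ℝ → E) (S : Set (EuclideanSpace ℝ (Fin 2))) :
    ∫ l in S, f (l 0) (l 1) = ∫ p : ℝ × ℝ in {p | !₂[p.1, p.2] ∈ S}, f p.1 p.2 := by
  let e := MeasurableEquiv.finTwoArrow.symm.trans (MeasurableEquiv.toLp 2 (Fin 2 → ℝ))
  have he : MeasurePreserving e :=
    (PiLp.volume_preserving_toLp (Fin 2)).comp (volume_preserving_finTwoArrow ℝ).symm
  exact (he.setIntegral_preimage_emb e.measurableEmbedding (fun l => f (l 0) (l 1)) S).symm

theorem inv_cube_mul_inv_sq_le {C x y : ℝ} (hC : 0 < C) (hx : 0 < x) (hy : 0 < y)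
    (hxy : C ≤ x * y) :
    1 / (x ^ 3 * y ^ 2) ≤ C ^ (-(3 / 2) : ℝ) * (x ^ (-(3 / 2) : ℝ) * y ^ (-(1 / 2) : ℝ)) := by
  have key : 1 / (x ^ 3 * y ^ 2)
      = (x * y) ^ (-(3 / 2) : ℝ) * (x ^ (-(3 / 2) : ℝ) * y ^ (-(1 / 2) : ℝ)) := by
    rw [mul_rpow hx.le hy.le, mul_mul_mul_comm, ← rpow_add hx, ← rpow_add hy]
    norm_num
    ring
  rw [key]
  exact mul_le_mul_of_nonneg_right (rpow_le_rpow_of_nonpos hC hxy (by norm_num)) (by positivity)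

theorem integrableOn_rpow_mul_rpow_Ici_prod_Ioc {s r a T : ℝ} (hs : s < -1) (hr : -1 < r)
    (ha : 0 < a) :
    IntegrableOn (fun p : ℝ × ℝ => p.1 ^ s * p.2 ^ r) (Ici a ×ˢ Ioc 0 T) := by
  rw [IntegrableOn, Measure.volume_eq_prod, ← Measure.prod_restrict]
  exact ((integrableOn_Ici_iff_integrableOn_Ioi).2 (integrableOn_Ioi_rpow_of_lt hs ha)).mul_prod
    ((intervalIntegral.intervalIntegrable_rpow' hr).1.mono_set Ioc_subset_uIoc)

theorem setIntegral_rpow_mul_rpow_Ici_prod_Ioc {s r a T : ℝ} (hs : s < -1) (hr : -1 < r)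
    (ha : 0 < a) (hT : 0 ≤ T) :
    ∫ p in Ici a ×ˢ Ioc 0 T, p.1 ^ s * p.2 ^ r
      = -a ^ (s + 1) / (s + 1) * (T ^ (r + 1) / (r + 1)) := by
  rw [Measure.volume_eq_prod, setIntegral_prod_mul (fun x => x ^ s) (fun y => y ^ r),
    integral_Ici_eq_integral_Ioi, integral_Ioi_rpow_of_lt hs ha,
    ← intervalIntegral.integral_of_le hT, integral_rpow (.inl hr),
    zero_rpow (by linarith), sub_zero]

theorem setIntegral_Ici_div_prod_Ioc_rpow_eq {C T : ℝ} (hC : 0 < C) (hT : 0 < T) :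
    ∫ p in Ici (C / T) ×ˢ Ioc 0 T,
      C ^ (-(3 / 2) : ℝ) * (p.1 ^ (-(3 / 2) : ℝ) * p.2 ^ (-(1 / 2) : ℝ)) = 4 / C ^ 2 * T := by
  rw [integral_const_mul, setIntegral_rpow_mul_rpow_Ici_prod_Ioc (by norm_num) (by norm_num)
    (by positivity) hT.le]
  have hC' : C ^ (-(3 / 2) : ℝ) * C ^ (-(1 / 2) : ℝ) = (C ^ 2)⁻¹ := by
    rw [← rpow_add hC, show (-(3 / 2) + -(1 / 2) : ℝ) = -(2 : ℕ) by norm_num, rpow_neg hC.le,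
      rpow_natCast]
  have hT' : T ^ (1 / 2 : ℝ) * T ^ (1 / 2 : ℝ) = T := by
    rw [← rpow_add hT]; norm_num
  norm_num
  rw [div_rpow hC.le hT.le, rpow_neg hT.le, div_inv_eq_mul]
  linear_combination 4 * (T ^ (1 / 2 : ℝ) * T ^ (1 / 2 : ℝ)) * hC' + 4 * (C ^ 2)⁻¹ * hT'

theorem norm_setIntegral_inv_cube_mul_inv_sq_le {C T : ℝ} (hC : 0 < C) (hT : 0 < T)
    {s : Set (ℝ × ℝ)} (hs : MeasurableSet s)
    (hsub : s ⊆ {p | 0 < p.2 ∧ p.2 ≤ T ∧ C ≤ p.1 * p.2}) :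
    ‖∫ p in s, 1 / (p.1 ^ 3 * p.2 ^ 2)‖ ≤ 4 / C ^ 2 * T := by
  have hpos : ∀ p ∈ s, 0 < p.1 ∧ 0 < p.2 := fun p hp =>
    ⟨pos_of_mul_pos_left (hC.trans_le (hsub hp).2.2) (hsub hp).1.le, (hsub hp).1⟩
  have hbox : s ⊆ Ici (C / T) ×ˢ Ioc 0 T := by
    intro p hp
    obtain ⟨hy, hyT, hxy⟩ := hsub hp
    refine ⟨(div_le_iff₀ hT).2 (hxy.trans ?_), hy, hyT⟩
    exact mul_le_mul_of_nonneg_left hyT (hpos p hp).1.le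
  set g : ℝ × ℝ → ℝ := fun p => C ^ (-(3 / 2) : ℝ) * (p.1 ^ (-(3 / 2) : ℝ) * p.2 ^ (-(1 / 2) : ℝ))
  have hg : IntegrableOn g (Ici (C / T) ×ˢ Ioc 0 T) :=
    (integrableOn_rpow_mul_rpow_Ici_prod_Ioc (by norm_num) (by norm_num)
      (by positivity)).const_mul _
  have hg_nonneg : ∀ p ∈ Ici (C / T) ×ˢ Ioc 0 T, 0 ≤ g p := by
    rintro p ⟨hx, hy, -⟩
    have : 0 < p.1 := (div_pos hC hT).trans_le hx
    positivity
  have hf_nonneg : ∀ p ∈ s, 0 ≤ 1 / (p.1 ^ 3 * p.2 ^ 2) := fun p hp => by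
    obtain ⟨hx, hy⟩ := hpos p hp
    positivity
  rw [norm_of_nonneg (setIntegral_nonneg hs hf_nonneg)]
  calc ∫ p in s, 1 / (p.1 ^ 3 * p.2 ^ 2)
      ≤ ∫ p in s, g p :=
        integral_mono_of_nonneg
          (ae_restrict_of_forall_mem hs hf_nonneg)
          (hg.mono_set hbox)
          (ae_restrict_of_forall_mem hs fun p hp =>
            inv_cube_mul_inv_sq_le hC (hpos p hp).1 (hpos p hp).2 (hsub hp).2.2)
    _ ≤ ∫ p in Ici (C / T) ×ˢ Ioc 0 T, g p :=
        setIntegral_mono_set hg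
          (ae_restrict_of_forall_mem (measurableSet_Ici.prod measurableSet_Ioc) hg_nonneg)
          hbox.eventuallyLE
    _ = 4 / C ^ 2 * T := setIntegral_Ici_div_prod_Ioc_rpow_eq hC hT

theorem integral_inv_cube_sq_isBigO_general (C A : ℝ) (hC : 0 < C) :
    (fun T : ℝ =>
      ∫ l in {l : EuclideanSpace ℝ (Fin 2) |
          A ≤ ‖l‖ ∧ ‖l‖ ≤ T ∧ 0 < l 0 ∧ 0 < l 1 ∧ C ≤ l 0 * l 1},
        1 / ((l 0) ^ 3 * (l 1) ^ 2)) =O[atTop] (fun T : ℝ => T) := by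
  refine isBigO_iff.2 ⟨4 / C ^ 2, ?_⟩
  filter_upwards [eventually_gt_atTop 0] with T hT
  rw [norm_of_nonneg hT.le, setIntegral_euclideanSpace_fin_two (fun x y => 1 / (x ^ 3 * y ^ 2))]
  refine norm_setIntegral_inv_cube_mul_inv_sq_le hC hT (by measurability) ?_
  rintro p ⟨-, hT', -, hy, hxy⟩
  exact ⟨hy, (le_abs_self p.2).trans ((PiLp.norm_apply_le _ 1).trans hT'), hxy⟩

/-- The integral of `1/(l₁³ l₂²)` over
`{l ∈ ℝ² : A ≤ ‖l‖ ≤ T, l₁ > 0, l₂ > 0, l₁ l₂ ≥ C}` is `O(T)` as `T → ∞`. -/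
theorem integral_inv_cube_sq_isBigO (C A : ℝ) (hC : 0 < C) (hA : 0 < A) :
    (fun T : ℝ =>
      ∫ l in {l : EuclideanSpace ℝ (Fin 2) |
          A ≤ ‖l‖ ∧ ‖l‖ ≤ T ∧ 0 < l 0 ∧ 0 < l 1 ∧ C ≤ l 0 * l 1},
        1 / ((l 0) ^ 3 * (l 1) ^ 2)) =O[atTop] (fun T : ℝ => T) :=
  integral_inv_cube_sq_isBigO_general C A hC
end

section
/- For every C > 0, A > 0 and α > 0, the integral of 1/(l₁² l₂²) over the region {l ∈ ℝ² : A ≤ ‖l‖ ≤ t, |l₁ l₂| ≥ C·(log ‖l‖)^{-1-α}} is O((log t)^{2+α}) as t → ∞. -/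
open MeasureTheory Filter Real Asymptotics

open Set
open scoped ENNReal

/-! For `‖l‖ > 2` we have `0 < log ‖l‖ ≤ log t`, so the constraint forces `|l₁ l₂| ≥ c`
with `c = C (log t)^{-1-α}`, and `|l₁|, |l₂| ≤ t`. By Tonelli, the integral of `1/(x² y²)` over
the hyperbolic region `{|x|, |y| ≤ t, |x y| ≥ c}` is at most `(4/c) log (t²/c)`: the `y`-integral
over `|y| ≥ c/|x|` is `2|x|/c`, and the remaining `x`-integral of `2/(c|x|)` runs over
`c/t ≤ |x| ≤ t`. This is `O((log t)^{2+α})`. The part `‖l‖ ≤ 2` contributes a constant; if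
that constant is infinite, so is the integral over the whole region, whose Bochner integral is
then `0`. -/

lemma setLIntegral_neg_union_le {g : ℝ → ℝ≥0∞} (hg : ∀ x, g (-x) = g x) (s : Set ℝ) :
    ∫⁻ x in -s ∪ s, g x ≤ 2 * ∫⁻ x in s, g x := by
  have hneg : ∫⁻ x in -s, g x = ∫⁻ x in s, g x := by
    rw [← (Measure.measurePreserving_neg volume).setLIntegral_comp_preimage_emb
      (Homeomorph.neg ℝ).measurableEmbedding g (-s)]
    simp [hg]
  calc _ ≤ _ := lintegral_union_le _ _ _
    _ = _ := by rw [hneg, two_mul]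

lemma lintegral_Ici_one_div_sq {m : ℝ} (hm : 0 < m) :
    ∫⁻ y in Ici m, ENNReal.ofReal (1 / y ^ 2) = ENNReal.ofReal (1 / m) := by
  have hrpow : EqOn (fun y : ℝ => y ^ (-2 : ℝ)) (fun y => 1 / y ^ 2) (Ioi m) := fun y hy => by
    dsimp only
    rw [rpow_neg (hm.trans hy).le, rpow_two, one_div]
  rw [← setLIntegral_congr Ioi_ae_eq_Ici, ← ofReal_integral_eq_lintegral_ofReal
    ((integrableOn_Ioi_rpow_of_lt (by norm_num) hm).congr_fun hrpow measurableSet_Ioi)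
    (ae_of_all _ fun y => by positivity), ← setIntegral_congr_fun measurableSet_Ioi hrpow,
    integral_Ioi_rpow_of_lt (by norm_num) hm]
  norm_num [rpow_neg_one]

lemma lintegral_abs_ge_one_div_sq_le {m : ℝ} (hm : 0 < m) :
    ∫⁻ y in {y : ℝ | m ≤ |y|}, ENNReal.ofReal (1 / y ^ 2) ≤ 2 * ENNReal.ofReal (1 / m) := by
  have hset : {y : ℝ | m ≤ |y|} = -Ici m ∪ Ici m := by
    ext y; simp [le_abs']
  rw [hset, ← lintegral_Ici_one_div_sq hm]
  exact setLIntegral_neg_union_le (fun y => by rw [neg_sq]) _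

lemma lintegral_Icc_one_div_le {a b : ℝ} (ha : 0 < a) :
    ∫⁻ x in Icc a b, ENNReal.ofReal (1 / x) ≤ ENNReal.ofReal (log (b / a)) := by
  rcases lt_or_ge b a with hba | hab
  · simp [Icc_eq_empty_of_lt hba]
  have hcont : ContinuousOn (fun x : ℝ => 1 / x) (Icc a b) :=
    continuousOn_const.div continuousOn_id fun x hx => (ha.trans_le hx.1).ne'
  rw [← ofReal_integral_eq_lintegral_ofReal hcont.integrableOn_Icc
    ((ae_restrict_iff' measurableSet_Icc).2 (ae_of_all _ fun x hx => by
      have := ha.trans_le hx.1; positivity)),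
    integral_Icc_eq_integral_Ioc, ← intervalIntegral.integral_of_le hab,
    integral_one_div_of_pos ha (ha.trans_le hab)]

lemma lintegral_abs_mem_Icc_one_div_abs_le {a b : ℝ} (ha : 0 < a) :
    ∫⁻ x in {x : ℝ | a ≤ |x| ∧ |x| ≤ b}, ENNReal.ofReal (1 / |x|)
      ≤ 2 * ENNReal.ofReal (log (b / a)) := by
  have hset : {x : ℝ | a ≤ |x| ∧ |x| ≤ b} = -Icc a b ∪ Icc a b := by
    ext x; simp only [mem_ofPred_eq, le_abs', abs_le, mem_union, Set.mem_neg, mem_Icc]; grind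
  rw [hset]
  refine (setLIntegral_neg_union_le (fun x => by rw [abs_neg]) _).trans ?_
  gcongr
  rw [setLIntegral_congr_fun measurableSet_Icc fun x hx => by rw [abs_of_pos (ha.trans_le hx.1)]]
  exact lintegral_Icc_one_div_le ha

def hyperbolicRegion (c t : ℝ) : Set (ℝ × ℝ) := {p | |p.1| ≤ t ∧ |p.2| ≤ t ∧ c ≤ |p.1 * p.2|}

lemma measurableSet_hyperbolicRegion (c t : ℝ) : MeasurableSet (hyperbolicRegion c t) := by
  unfold hyperbolicRegion; measurability

lemma lintegral_hyperbolicRegion_slice_le {c t : ℝ} (hc : 0 < c) (ht : 0 < t) (x : ℝ) :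
    ∫⁻ y, (hyperbolicRegion c t).indicator
        (fun p => ENNReal.ofReal (1 / (p.1 ^ 2 * p.2 ^ 2))) (x, y)
      ≤ {x : ℝ | c / t ≤ |x| ∧ |x| ≤ t}.indicator
        (fun x => 2 * ENNReal.ofReal (1 / c) * ENNReal.ofReal (1 / |x|)) x := by
  by_cases hx : x ∈ {x : ℝ | c / t ≤ |x| ∧ |x| ≤ t}
  · have hx0 : 0 < |x| := (div_pos hc ht).trans_le hx.1
    calc ∫⁻ y, (hyperbolicRegion c t).indicator
          (fun p => ENNReal.ofReal (1 / (p.1 ^ 2 * p.2 ^ 2))) (x, y)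
        ≤ ∫⁻ y in {y : ℝ | c / |x| ≤ |y|},
            ENNReal.ofReal (1 / x ^ 2) * ENNReal.ofReal (1 / y ^ 2) := by
          rw [← lintegral_indicator (measurableSet_le measurable_const measurable_abs)]
          refine lintegral_mono fun y => ?_
          by_cases hy : (x, y) ∈ hyperbolicRegion c t
          · have hy' : y ∈ {y : ℝ | c / |x| ≤ |y|} := by
              rw [mem_ofPred_eq, div_le_iff₀ hx0, mul_comm, ← abs_mul]
              exact hy.2.2
            rw [indicator_of_mem hy, indicator_of_mem hy', ← ENNReal.ofReal_mul (by positivity),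
              one_div_mul_one_div]
          · rw [indicator_of_notMem hy]
            exact zero_le
      _ ≤ ENNReal.ofReal (1 / x ^ 2) * (2 * ENNReal.ofReal (1 / (c / |x|))) := by
          rw [lintegral_const_mul' _ _ ENNReal.ofReal_ne_top]
          gcongr
          exact lintegral_abs_ge_one_div_sq_le (div_pos hc hx0)
      _ = _ := by
          rw [indicator_of_mem hx, mul_left_comm, ← ENNReal.ofReal_mul (by positivity), mul_assoc,
            ← ENNReal.ofReal_mul (by positivity), ← sq_abs x]
          field_simp
  · have hxH (y : ℝ) : (x, y) ∉ hyperbolicRegion c t := fun ⟨hxt, hyt, hxy⟩ => hx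
      ⟨(div_le_iff₀ ht).2 (by rw [abs_mul] at hxy; nlinarith [abs_nonneg x]), hxt⟩
    rw [lintegral_congr fun y => indicator_of_notMem (hxH y) _, lintegral_zero]
    exact zero_le

lemma lintegral_hyperbolicRegion_le {c t : ℝ} (hc : 0 < c) (ht : 0 < t) :
    ∫⁻ p in hyperbolicRegion c t, ENNReal.ofReal (1 / (p.1 ^ 2 * p.2 ^ 2))
      ≤ ENNReal.ofReal (4 / c * log (t ^ 2 / c)) := by
  have hS : MeasurableSet {x : ℝ | c / t ≤ |x| ∧ |x| ≤ t} :=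
    (measurableSet_le measurable_const measurable_abs).inter
      (measurableSet_le measurable_abs measurable_const)
  calc ∫⁻ p in hyperbolicRegion c t, ENNReal.ofReal (1 / (p.1 ^ 2 * p.2 ^ 2))
      ≤ ∫⁻ x, ∫⁻ y, (hyperbolicRegion c t).indicator
          (fun p => ENNReal.ofReal (1 / (p.1 ^ 2 * p.2 ^ 2))) (x, y) := by
        rw [← lintegral_indicator (measurableSet_hyperbolicRegion c t), Measure.volume_eq_prod]
        exact lintegral_prod_le _
    _ ≤ ∫⁻ x in {x : ℝ | c / t ≤ |x| ∧ |x| ≤ t},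
          2 * ENNReal.ofReal (1 / c) * ENNReal.ofReal (1 / |x|) := by
        rw [← lintegral_indicator hS]
        exact lintegral_mono (lintegral_hyperbolicRegion_slice_le hc ht)
    _ ≤ 2 * ENNReal.ofReal (1 / c) * (2 * ENNReal.ofReal (log (t / (c / t)))) := by
        rw [lintegral_const_mul' _ _ (by finiteness)]
        gcongr
        exact lintegral_abs_mem_Icc_one_div_abs_le (div_pos hc ht)
    _ = ENNReal.ofReal (4 / c * log (t ^ 2 / c)) := by
        rw [show t / (c / t) = t ^ 2 / c by field_simp, show 4 / c = 2 * (1 / c) * 2 by ring,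
          ENNReal.ofReal_mul (by positivity), ENNReal.ofReal_mul (by positivity),
          ENNReal.ofReal_mul (by positivity), ENNReal.ofReal_ofNat]
        ring

noncomputable def euclideanFinTwoEquivProd : EuclideanSpace ℝ (Fin 2) ≃ᵐ ℝ × ℝ :=
  (MeasurableEquiv.toLp 2 (Fin 2 → ℝ)).symm.trans MeasurableEquiv.finTwoArrow

lemma measurePreserving_euclideanFinTwoEquivProd : MeasurePreserving euclideanFinTwoEquivProd :=
  (volume_preserving_finTwoArrow ℝ).comp
    (EuclideanSpace.volume_preserving_symm_measurableEquiv_toLp (Fin 2))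

def logHyperbolicRegion (C A α t : ℝ) : Set (EuclideanSpace ℝ (Fin 2)) :=
  {l | A ≤ ‖l‖ ∧ ‖l‖ ≤ t ∧ C * (Real.log ‖l‖) ^ (-1 - α) ≤ |l 0 * l 1|}

lemma logHyperbolicRegion_subset_union {C A α t : ℝ} (hC : 0 ≤ C) (hα : -1 ≤ α) :
    logHyperbolicRegion C A α t ⊆ logHyperbolicRegion C A α 2 ∪
      euclideanFinTwoEquivProd ⁻¹' hyperbolicRegion (C * log t ^ (-1 - α)) t := by
  rintro l ⟨hAl, hlt, hl⟩
  rcases le_or_gt ‖l‖ 2 with hl2 | hl2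
  · exact Or.inl ⟨hAl, hl2, hl⟩
  right
  have hlog : 0 < log ‖l‖ := log_pos (by linarith)
  exact ⟨(PiLp.norm_apply_le l 0).trans hlt, (PiLp.norm_apply_le l 1).trans hlt,
    le_trans (mul_le_mul_of_nonneg_left
      (rpow_le_rpow_of_nonpos hlog (log_le_log (by linarith) hlt) (by linarith)) hC) hl⟩

lemma four_div_mul_log_sq_div_le {C α t : ℝ} (hC : 0 < C) (hα : -1 ≤ α) (ht : exp 1 ≤ t) :
    4 / (C * log t ^ (-1 - α)) * log (t ^ 2 / (C * log t ^ (-1 - α)))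
      ≤ 4 / C * (3 + α + |log C|) * log t ^ (2 + α) := by
  have ht0 : 0 < t := (exp_pos 1).trans_le ht
  set L := log t with hLdef
  have hL : 1 ≤ L := (le_log_iff_exp_le ht0).2 ht
  have hL0 : 0 < L := one_pos.trans_le hL
  have hinv : 4 / (C * L ^ (-1 - α)) = 4 / C * L ^ (1 + α) := by
    rw [show -1 - α = -(1 + α) by ring, rpow_neg hL0.le]
    field_simp
  have hlog : log (t ^ 2 / (C * L ^ (-1 - α))) ≤ (3 + α + |log C|) * L := by
    rw [log_div (by positivity) (by positivity), log_mul hC.ne' (by positivity), log_rpow hL0,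
      log_pow, ← hLdef]
    push_cast
    nlinarith [log_le_sub_one_of_pos hL0, neg_abs_le (log C), abs_nonneg (log C)]
  calc 4 / (C * L ^ (-1 - α)) * log (t ^ 2 / (C * L ^ (-1 - α)))
      ≤ 4 / C * L ^ (1 + α) * ((3 + α + |log C|) * L) := by
        rw [hinv]
        gcongr
    _ = 4 / C * (3 + α + |log C|) * L ^ (2 + α) := by
        rw [show (2 : ℝ) + α = 1 + α + 1 by ring, rpow_add_one hL0.ne']
        ring

lemma logHyperbolicRegion_mono {C A α s t : ℝ} (hst : s ≤ t) :
    logHyperbolicRegion C A α s ⊆ logHyperbolicRegion C A α t :=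
  fun _ ⟨hA, hs, hl⟩ => ⟨hA, hs.trans hst, hl⟩

lemma toReal_lintegral_logHyperbolicRegion_le {C A α t : ℝ} (hC : 0 < C) (hα : -1 ≤ α)
    (ht : exp 1 ≤ t) :
    (∫⁻ l in logHyperbolicRegion C A α t, ENNReal.ofReal (1 / (l 0 ^ 2 * l 1 ^ 2))).toReal
      ≤ (∫⁻ l in logHyperbolicRegion C A α 2, ENNReal.ofReal (1 / (l 0 ^ 2 * l 1 ^ 2))).toReal
        + 4 / C * (3 + α + |log C|) * log t ^ (2 + α) := by
  have ht2 : 2 ≤ t := le_trans (by linarith [add_one_le_exp (1 : ℝ)]) ht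
  have hlogt : 0 < log t := log_pos (by linarith)
  set c := C * log t ^ (-1 - α)
  have hc : 0 < c := mul_pos hC (rpow_pos_of_pos hlogt _)
  have hbound : 0 ≤ 4 / C * (3 + α + |log C|) * log t ^ (2 + α) := by
    have : 0 ≤ 3 + α := by linarith
    positivity
  have hH : ∫⁻ l in euclideanFinTwoEquivProd ⁻¹' hyperbolicRegion c t,
      ENNReal.ofReal (1 / (l 0 ^ 2 * l 1 ^ 2))
        ≤ ENNReal.ofReal (4 / C * (3 + α + |log C|) * log t ^ (2 + α)) :=
    ((measurePreserving_euclideanFinTwoEquivProd.setLIntegral_comp_preimage_emb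
      euclideanFinTwoEquivProd.measurableEmbedding _ _).trans_le
      (lintegral_hyperbolicRegion_le hc (by linarith))).trans
      (ENNReal.ofReal_le_ofReal (four_div_mul_log_sq_div_le hC hα ht))
  rw [← ENNReal.toReal_ofReal hbound]
  refine ENNReal.toReal_le_add' ?_ ?_ fun h => absurd h ENNReal.ofReal_ne_top
  · exact (lintegral_mono_set (logHyperbolicRegion_subset_union hC.le hα)).trans
      ((lintegral_union_le _ _ _).trans (add_le_add le_rfl hH))
  · exact fun h => top_unique (h ▸ lintegral_mono_set (logHyperbolicRegion_mono ht2))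

theorem integral_inv_sq_sq_log_isBigO_general (C A α : ℝ) (hC : 0 < C) (hα : 0 < α) :
    (fun t : ℝ =>
      ∫ l in {l : EuclideanSpace ℝ (Fin 2) |
          A ≤ ‖l‖ ∧ ‖l‖ ≤ t ∧ C * (Real.log ‖l‖) ^ (-1 - α) ≤ |l 0 * l 1|},
        1 / ((l 0) ^ 2 * (l 1) ^ 2)) =O[atTop]
      (fun t : ℝ => (Real.log t) ^ ((2 : ℝ) + α)) := by
  set B := (∫⁻ l in logHyperbolicRegion C A α 2, ENNReal.ofReal (1 / (l 0 ^ 2 * l 1 ^ 2))).toReal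
  refine isBigO_iff.2 ⟨B + 4 / C * (3 + α + |log C|), ?_⟩
  filter_upwards [eventually_ge_atTop (exp 1)] with t ht
  have hlog : 1 ≤ log t ^ (2 + α) :=
    one_le_rpow ((le_log_iff_exp_le ((exp_pos 1).trans_le ht)).2 ht) (by linarith)
  rw [integral_eq_lintegral_of_nonneg_ae (ae_of_all _ fun l => by positivity)
      (Measurable.aestronglyMeasurable (by fun_prop)), norm_of_nonneg ENNReal.toReal_nonneg,
    norm_of_nonneg (by linarith)]
  refine (toReal_lintegral_logHyperbolicRegion_le hC (by linarith) ht).trans ?_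
  nlinarith [show 0 ≤ B from ENNReal.toReal_nonneg]

/-- For every `C, A, α > 0`, the integral of `1/(l₁² l₂²)` over
`{l ∈ ℝ² : A ≤ ‖l‖ ≤ t, |l₁ l₂| ≥ C (log ‖l‖)^{-1-α}}` is `O((log t)^{2+α})`. -/
theorem integral_inv_sq_sq_log_isBigO (C A α : ℝ) (hC : 0 < C) (hA : 0 < A) (hα : 0 < α) :
    (fun t : ℝ =>
      ∫ l in {l : EuclideanSpace ℝ (Fin 2) |
          A ≤ ‖l‖ ∧ ‖l‖ ≤ t ∧ C * (Real.log ‖l‖) ^ (-1 - α) ≤ |l 0 * l 1|},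
        1 / ((l 0) ^ 2 * (l 1) ^ 2)) =O[atTop]
      (fun t : ℝ => (Real.log t) ^ ((2 : ℝ) + α)) :=
  integral_inv_sq_sq_log_isBigO_general C A α hC hα
end

section
/- For every integer d ≥ 2 and every C > 0, A > 0, the integral of 1/(l₁² ⋯ l_d²) over {l ∈ ℝ^d : A ≤ ‖l‖ ≤ t, |l₁ ⋯ l_d| ≥ C} is O((log t)^{d-1}) as t → ∞. -/
/-!
Integrate out `y = x₁` before the other coordinates. On `{|xᵢ| ≤ t, |x₁ ⋯ x_d| ≥ C}` one has
`|y| ≥ C / P` with `P = |x₂ ⋯ x_d|`, so `∫ y⁻² dy ≤ 2 P / C`, which leaves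
`(2 / C) ∫ 1 / P` over a set on which every `|xⱼ|` (`j ≥ 2`) lies in `[C / t ^ (d - 1), t]`.
That integral is bounded by a product of `d - 1` integrals `∫ dy / |y| = 2 log (t ^ d / C)`,
so the whole integral is at most `(2 / C) (2 log (t ^ d / C)) ^ (d - 1) = O((log t) ^ (d - 1))`.
-/

open MeasureTheory Filter Real Asymptotics Set
open scoped ENNReal

section FinPi

variable {E : Type*} [MeasurableSpace E] (μ : Measure E) [SigmaFinite μ]

theorem lintegral_pi_fin_succ_eq_lintegral_cons {n : ℕ} {f : (Fin (n + 1) → E) → ℝ≥0∞}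
    (hf : Measurable f) :
    ∫⁻ x, f x ∂Measure.pi (fun _ ↦ μ) =
      ∫⁻ x', ∫⁻ y, f (Fin.cons y x') ∂μ ∂Measure.pi (fun _ ↦ μ) := by
  rw [← ((measurePreserving_piFinSuccAbove (fun _ ↦ μ) 0).symm).lintegral_comp hf,
    lintegral_prod_symm (fun p ↦ f ((MeasurableEquiv.piFinSuccAbove (fun _ ↦ E) 0).symm p))
      (hf.comp (MeasurableEquiv.measurable _)).aemeasurable]
  simp [MeasurableEquiv.piFinSuccAbove_symm_apply, Fin.insertNthEquiv, Fin.insertNth_zero']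

theorem lintegral_fin_prod_eq_prod {n : ℕ} {f : Fin n → E → ℝ≥0∞} (hf : ∀ i, Measurable (f i)) :
    ∫⁻ x, ∏ i, f i (x i) ∂Measure.pi (fun _ ↦ μ) = ∏ i, ∫⁻ y, f i y ∂μ := by
  induction n with
  | zero => simp
  | succ n ih =>
    rw [lintegral_pi_fin_succ_eq_lintegral_cons μ (by fun_prop)]
    simp only [Fin.prod_univ_succ, Fin.cons_zero, Fin.cons_succ]
    rw [← ih fun i ↦ hf i.succ, ← lintegral_const_mul _ (by fun_prop)]
    exact lintegral_congr fun x' ↦ lintegral_mul_const _ (hf 0)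

end FinPi

theorem lintegral_comp_abs (f : ℝ → ℝ≥0∞) : ∫⁻ y, f |y| = 2 * ∫⁻ y in Ioi 0, f y := by
  have hpos : ∫⁻ y in Ioi 0, f |y| = ∫⁻ y in Ioi 0, f y :=
    setLIntegral_congr_fun measurableSet_Ioi fun y hy ↦ by rw [abs_of_pos hy]
  have hneg : ∫⁻ y in Iio 0, f |y| = ∫⁻ y in Ioi 0, f y := by
    have := (Measure.measurePreserving_neg (volume : Measure ℝ)).setLIntegral_comp_preimage_emb
      (Homeomorph.neg ℝ).measurableEmbedding (fun y ↦ f |y|) (Ioi 0)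
    simp only [abs_neg] at this
    rw [← hpos, ← this]
    simp
  rw [← lintegral_add_compl _ measurableSet_Iio, compl_Iio,
    Measure.restrict_congr_set Ioi_ae_eq_Ici.symm, hneg, hpos, two_mul]

theorem setLIntegral_preimage_abs {s : Set ℝ} (hs : MeasurableSet s) (hs0 : s ⊆ Ioi 0)
    (f : ℝ → ℝ≥0∞) :
    ∫⁻ y in abs ⁻¹' s, f |y| = 2 * ∫⁻ y in s, f y := by
  have h (y : ℝ) : (abs ⁻¹' s).indicator (fun y ↦ f |y|) y = s.indicator f |y| :=
    indicator_comp_right abs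
  rw [← lintegral_indicator (measurable_abs hs), lintegral_congr h, lintegral_comp_abs,
    lintegral_indicator hs, Measure.restrict_restrict hs, inter_eq_left.2 hs0]

theorem setLIntegral_Icc_inv_le {a : ℝ} (t : ℝ) (ha : 0 < a) :
    ∫⁻ y in Icc a t, ENNReal.ofReal y⁻¹ ≤ ENNReal.ofReal (log (t / a)) := by
  rcases lt_or_ge t a with hta | hat
  · simp [Icc_eq_empty_of_lt hta]
  have hcont : ContinuousOn (fun y : ℝ ↦ y⁻¹) (Icc a t) :=
    continuousOn_inv₀.mono fun y hy ↦ (ha.trans_le hy.1).ne'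
  rw [← ofReal_integral_eq_lintegral_ofReal hcont.integrableOn_Icc, integral_Icc_eq_integral_Ioc,
    ← intervalIntegral.integral_of_le hat, integral_inv_of_pos ha (ha.trans_le hat)]
  filter_upwards [ae_restrict_mem measurableSet_Icc] with y hy
  exact inv_nonneg.2 (ha.le.trans hy.1)

theorem setLIntegral_Ici_inv_sq {a : ℝ} (ha : 0 < a) :
    ∫⁻ y in Ici a, ENNReal.ofReal (y ^ 2)⁻¹ = ENNReal.ofReal a⁻¹ := by
  have h : ∀ y ∈ Ioi a, (y ^ 2)⁻¹ = y ^ (-2 : ℝ) := fun y hy ↦ by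
    rw [Real.rpow_neg (ha.trans hy).le, Real.rpow_two]
  rw [Measure.restrict_congr_set Ioi_ae_eq_Ici.symm, setLIntegral_congr_fun measurableSet_Ioi
    fun y hy ↦ by rw [h y hy], ← ofReal_integral_eq_lintegral_ofReal
    (integrableOn_Ioi_rpow_of_lt (by norm_num) ha), integral_Ioi_rpow_of_lt (by norm_num) ha]
  · norm_num [Real.rpow_neg_one]
  · filter_upwards [ae_restrict_mem measurableSet_Ioi] with y hy
    exact Real.rpow_nonneg (ha.trans hy).le _

theorem setLIntegral_inv_abs_le {a : ℝ} (t : ℝ) (ha : 0 < a) :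
    ∫⁻ y in abs ⁻¹' Icc a t, ENNReal.ofReal |y|⁻¹ ≤ ENNReal.ofReal (2 * log (t / a)) := by
  rw [setLIntegral_preimage_abs measurableSet_Icc (fun y hy ↦ ha.trans_le hy.1)
    fun y ↦ ENNReal.ofReal y⁻¹, ENNReal.ofReal_mul zero_le_two, ENNReal.ofReal_ofNat]
  gcongr
  exact setLIntegral_Icc_inv_le t ha

theorem setLIntegral_inv_sq_abs_ge {b : ℝ} (hb : 0 < b) :
    ∫⁻ y in abs ⁻¹' Ici b, ENNReal.ofReal (y ^ 2)⁻¹ = ENNReal.ofReal (2 / b) := by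
  have := setLIntegral_preimage_abs measurableSet_Ici (Ici_subset_Ioi.2 hb)
    fun y ↦ ENNReal.ofReal (y ^ 2)⁻¹
  simp only [sq_abs] at this
  rw [this, setLIntegral_Ici_inv_sq hb, div_eq_mul_inv, ENNReal.ofReal_mul zero_le_two,
    ENNReal.ofReal_ofNat]

def cubeProdAbsGe (n : ℕ) (t C : ℝ) : Set (Fin n → ℝ) :=
  {x | (∀ i, |x i| ≤ t) ∧ C ≤ ∏ i, |x i|}

theorem measurableSet_cubeProdAbsGe (n : ℕ) (t C : ℝ) :
    MeasurableSet (cubeProdAbsGe n t C) := by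
  unfold cubeProdAbsGe
  measurability

theorem prod_le_mul_pow_card_sub_one {ι : Type*} [Fintype ι] {f : ι → ℝ} {t : ℝ}
    (hf0 : ∀ i, 0 ≤ f i) (hft : ∀ i, f i ≤ t) (j : ι) :
    ∏ i, f i ≤ f j * t ^ (Fintype.card ι - 1) := by
  classical
  rw [← Finset.mul_prod_erase _ _ (Finset.mem_univ j), ← Finset.card_univ,
    ← Finset.card_erase_of_mem (Finset.mem_univ j), ← Finset.prod_const]
  exact mul_le_mul_of_nonneg_left (Finset.prod_le_prod (fun i _ ↦ hf0 i) fun i _ ↦ hft i) (hf0 j)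

theorem abs_mem_Icc_of_cons_mem_cubeProdAbsGe {m : ℕ} {t C y : ℝ} {x : Fin m → ℝ} (ht : 0 < t)
    (hx : Fin.cons y x ∈ cubeProdAbsGe (m + 1) t C) (j : Fin m) :
    |x j| ∈ Icc (C / t ^ m) t := by
  obtain ⟨hle, hC⟩ := hx
  refine ⟨(div_le_iff₀ (pow_pos ht m)).2 ?_, by simpa using hle j.succ⟩
  simpa using hC.trans (prod_le_mul_pow_card_sub_one (fun _ ↦ abs_nonneg _) hle j.succ)

theorem lintegral_cons_indicator_cubeProdAbsGe_le {m : ℕ} {t C : ℝ} (hC : 0 < C) (ht : 0 < t)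
    (x : Fin m → ℝ) :
    ∫⁻ y, (cubeProdAbsGe (m + 1) t C).indicator
        (fun x ↦ ENNReal.ofReal (∏ i, x i ^ 2)⁻¹) (Fin.cons y x) ≤
      ENNReal.ofReal (2 / C) * (univ.pi fun _ ↦ abs ⁻¹' Icc (C / t ^ m) t).indicator
        (fun x ↦ ENNReal.ofReal (∏ j, |x j|)⁻¹) x := by
  by_cases hx : x ∈ univ.pi fun _ ↦ abs ⁻¹' Icc (C / t ^ m) t
  swap
  · rw [indicator_of_notMem hx, mul_zero]
    refine le_of_eq ((lintegral_congr fun y ↦ indicator_of_notMem (fun hy ↦ hx ?_) _).trans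
      lintegral_zero)
    exact fun j _ ↦ abs_mem_Icc_of_cons_mem_cubeProdAbsGe ht hy j
  set P := ∏ j, |x j|
  have hP : 0 < P := Finset.prod_pos fun j _ ↦
    (div_pos hC (pow_pos ht m)).trans_le (hx j (mem_univ j)).1
  have hslice (y : ℝ) : (cubeProdAbsGe (m + 1) t C).indicator
        (fun x ↦ ENNReal.ofReal (∏ i, x i ^ 2)⁻¹) (Fin.cons y x) ≤
      (abs ⁻¹' Ici (C / P)).indicator (fun y ↦ ENNReal.ofReal (y ^ 2)⁻¹) y *
        ENNReal.ofReal (P ^ 2)⁻¹ := by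
    by_cases hy : Fin.cons y x ∈ cubeProdAbsGe (m + 1) t C
    swap
    · rw [indicator_of_notMem hy]
      exact zero_le
    have hyP : C / P ≤ |y| := by
      rw [div_le_iff₀ hP]
      simpa [Fin.prod_univ_succ] using hy.2
    have hsq : ∏ i, (Fin.cons y x : Fin (m + 1) → ℝ) i ^ 2 = y ^ 2 * P ^ 2 := by
      simp [Fin.prod_univ_succ, P, ← Finset.prod_pow]
    rw [indicator_of_mem hy, indicator_of_mem (show y ∈ abs ⁻¹' Ici (C / P) from hyP),
      ← ENNReal.ofReal_mul (by positivity), hsq, mul_inv]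
  calc _ ≤ ∫⁻ y, (abs ⁻¹' Ici (C / P)).indicator (fun y ↦ ENNReal.ofReal (y ^ 2)⁻¹) y *
        ENNReal.ofReal (P ^ 2)⁻¹ := lintegral_mono hslice
    _ = ENNReal.ofReal (2 / (C / P)) * ENNReal.ofReal (P ^ 2)⁻¹ := by
      rw [lintegral_mul_const' _ _ ENNReal.ofReal_ne_top,
        lintegral_indicator (measurable_abs measurableSet_Ici),
        setLIntegral_inv_sq_abs_ge (div_pos hC hP)]
    _ = ENNReal.ofReal (2 / C) * ENNReal.ofReal P⁻¹ := by
      rw [← ENNReal.ofReal_mul (by positivity), ← ENNReal.ofReal_mul (by positivity)]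
      congr 1
      field_simp
    _ = _ := by rw [indicator_of_mem hx]

theorem setLIntegral_cubeProdAbsGe_inv_prod_sq_le {m : ℕ} {t C : ℝ} (hC : 0 < C) (ht : 0 < t) :
    ∫⁻ x in cubeProdAbsGe (m + 1) t C, ENNReal.ofReal (∏ i, x i ^ 2)⁻¹ ≤
      ENNReal.ofReal (2 / C) * ENNReal.ofReal (2 * log (t ^ (m + 1) / C)) ^ m := by
  have hR := measurableSet_cubeProdAbsGe (m + 1) t C
  have hbox : MeasurableSet (univ.pi fun _ : Fin m ↦ abs ⁻¹' Icc (C / t ^ m) t) :=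
    MeasurableSet.univ_pi fun _ ↦ measurable_abs measurableSet_Icc
  rw [← lintegral_indicator hR, volume_pi,
    lintegral_pi_fin_succ_eq_lintegral_cons _ ((by fun_prop : Measurable _).indicator hR)]
  calc _ ≤ ∫⁻ x, ENNReal.ofReal (2 / C) * (univ.pi fun _ ↦ abs ⁻¹' Icc (C / t ^ m) t).indicator
        (fun x ↦ ENNReal.ofReal (∏ j, |x j|)⁻¹) x ∂Measure.pi fun _ ↦ volume :=
        lintegral_mono fun x ↦ lintegral_cons_indicator_cubeProdAbsGe_le hC ht x
    _ = ENNReal.ofReal (2 / C) * ∏ _j : Fin m,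
          ∫⁻ y in abs ⁻¹' Icc (C / t ^ m) t, ENNReal.ofReal |y|⁻¹ := by
      rw [lintegral_const_mul' _ _ ENNReal.ofReal_ne_top, lintegral_indicator hbox,
        Measure.restrict_pi_pi, ← lintegral_fin_prod_eq_prod _ fun _ ↦ by fun_prop]
      congr 1
      refine lintegral_congr fun x ↦ ?_
      rw [← Finset.prod_inv_distrib, ENNReal.ofReal_prod_of_nonneg fun j _ ↦ by positivity]
    _ ≤ ENNReal.ofReal (2 / C) * ENNReal.ofReal (2 * log (t ^ (m + 1) / C)) ^ m := by
      rw [Finset.prod_const, Finset.card_univ, Fintype.card_fin]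
      gcongr
      convert setLIntegral_inv_abs_le t (div_pos hC (pow_pos ht m)) using 4
      field_simp
      ring

theorem norm_setIntegral_inv_prod_sq_le {m : ℕ} {t C : ℝ} (hC : 0 < C) (ht : 0 < t)
    (hCt : C ≤ t ^ (m + 1)) {S : Set (EuclideanSpace ℝ (Fin (m + 1)))}
    (hS : ∀ l ∈ S, ‖l‖ ≤ t ∧ C ≤ |∏ i, l i|) :
    ‖∫ l in S, 1 / ∏ i, l i ^ 2‖ ≤ 2 / C * (2 * log (t ^ (m + 1) / C)) ^ m := by
  have hlog : 0 ≤ log (t ^ (m + 1) / C) := log_nonneg ((one_le_div hC).2 hCt)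
  set e := (MeasurableEquiv.toLp 2 (Fin (m + 1) → ℝ)).symm
  have hSR : S ⊆ e ⁻¹' cubeProdAbsGe (m + 1) t C := fun l hl ↦
    ⟨fun i ↦ (PiLp.norm_apply_le l i).trans (hS l hl).1,
      (hS l hl).2.trans (Finset.abs_prod _ _).le⟩
  rw [← ENNReal.ofReal_le_ofReal_iff (by positivity), ofReal_norm]
  calc ‖∫ l in S, 1 / ∏ i, l i ^ 2‖ₑ ≤ ∫⁻ l in S, ‖1 / ∏ i, l i ^ 2‖ₑ :=
        enorm_integral_le_lintegral_enorm _
    _ = ∫⁻ l in S, ENNReal.ofReal (∏ i, e l i ^ 2)⁻¹ := by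
      refine lintegral_congr fun l ↦ ?_
      rw [one_div, Real.enorm_of_nonneg (by positivity)]
      rfl
    _ ≤ ∫⁻ l in e ⁻¹' cubeProdAbsGe (m + 1) t C, ENNReal.ofReal (∏ i, e l i ^ 2)⁻¹ :=
      lintegral_mono_set hSR
    _ = ∫⁻ x in cubeProdAbsGe (m + 1) t C, ENNReal.ofReal (∏ i, x i ^ 2)⁻¹ :=
      (EuclideanSpace.volume_preserving_symm_measurableEquiv_toLp _).setLIntegral_comp_preimage_emb
        e.measurableEmbedding (fun x ↦ ENNReal.ofReal (∏ i, x i ^ 2)⁻¹) _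
    _ ≤ ENNReal.ofReal (2 / C) * ENNReal.ofReal (2 * log (t ^ (m + 1) / C)) ^ m :=
      setLIntegral_cubeProdAbsGe_inv_prod_sq_le hC ht
    _ = ENNReal.ofReal (2 / C * (2 * log (t ^ (m + 1) / C)) ^ m) := by
      rw [← ENNReal.ofReal_pow (by positivity), ← ENNReal.ofReal_mul (by positivity)]

theorem isBigO_log_pow_div (n : ℕ) {C : ℝ} (hC : C ≠ 0) :
    (fun t ↦ log (t ^ n / C)) =O[atTop] log := by
  refine IsBigO.congr' (((isBigO_refl _ _).const_mul_left (n : ℝ)).sub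
    (isLittleO_const_log_atTop (c := log C)).isBigO) ?_ EventuallyEq.rfl
  filter_upwards [eventually_gt_atTop 0] with t ht
  rw [log_div (pow_ne_zero n ht.ne') hC, log_pow]

theorem integral_inv_prod_sq_isBigO_general (d : ℕ) (hd : 2 ≤ d) (C A : ℝ) (hC : 0 < C) :
    (fun t : ℝ =>
      ∫ l in {l : EuclideanSpace ℝ (Fin d) |
          A ≤ ‖l‖ ∧ ‖l‖ ≤ t ∧ C ≤ |∏ i, l i|},
        1 / (∏ i, (l i) ^ 2)) =O[atTop] (fun t : ℝ => (Real.log t) ^ (d - 1)) := by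
  obtain ⟨m, rfl⟩ : ∃ m, d = m + 1 := ⟨d - 1, by omega⟩
  refine (IsBigO.of_bound' ?_).trans
    (((isBigO_log_pow_div (m + 1) hC.ne').const_mul_left 2).pow m |>.const_mul_left (2 / C))
  filter_upwards [eventually_ge_atTop (max 1 C)] with t ht
  have ht1 : 1 ≤ t := le_of_max_le_left ht
  have hCt : C ≤ t ^ (m + 1) := (le_of_max_le_right ht).trans (le_self_pow₀ ht1 (by omega))
  exact (norm_setIntegral_inv_prod_sq_le hC (by linarith) hCt fun l hl ↦ hl.2).trans
    (le_abs_self _)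

/-- For `d ≥ 2`, `C, A > 0`, the integral of `1/(l₁²⋯l_d²)` over
`{l ∈ ℝ^d : A ≤ ‖l‖ ≤ t, |l₁⋯l_d| ≥ C}` is `O((log t)^{d-1})`. -/
theorem integral_inv_prod_sq_isBigO (d : ℕ) (hd : 2 ≤ d) (C A : ℝ) (hC : 0 < C) (hA : 0 < A) :
    (fun t : ℝ =>
      ∫ l in {l : EuclideanSpace ℝ (Fin d) |
          A ≤ ‖l‖ ∧ ‖l‖ ≤ t ∧ C ≤ |∏ i, l i|},
        1 / (∏ i, (l i) ^ 2)) =O[atTop] (fun t : ℝ => (Real.log t) ^ (d - 1)) :=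
  integral_inv_prod_sq_isBigO_general d hd C A hC
end

section
/- Fix x ∈ ℝ and let Δ(t,x) = 4(⌊t+x⌋ − ⌈−t+x⌉ + 1 − 2t). Let y ∈ [0,1] be the fractional distance y = |t_{2,0} − t_{1,0}|, where t_{1,0} is the smallest t ≥ 0 with t + x ∈ ℤ and t_{2,0} is the smallest t ≥ 0 with −t + x ∈ ℤ. Then for every natural number k, (1/T)∫₀^T Δ(t,x)^k dt converges as T → ∞ to a_k = 4^k (1 + (−1)^k)(y^{k+1} + (1−y)^{k+1})/(2(k+1)). -/
/-!
Up to the factor 4, `Δ(t, x)` is `1 - fract (t + x) - fract (t - x)`, which is 1-periodic in `t`,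
so the averaged moments converge to the moment over one period. Shifting by `x`, one period is
cut by `c = fract (2x)` into two pieces on which `Δ / 4` is affine of slope `-2`, sweeping out
`[-c, c]` and `[-(1 - c), 1 - c]`; and `y` is either `c` or `1 - c`.
-/

open MeasureTheory Filter Real Topology Function Set Int

theorem Function.Periodic.tendsto_average_intervalIntegral {g : ℝ → ℝ} {p : ℝ}
    (hg : Periodic g p) (hp : 0 < p) (hint : IntervalIntegrable g volume 0 p) :
    Tendsto (fun T : ℝ => (1 / T) * ∫ t in (0 : ℝ)..T, g t) atTop
      (𝓝 ((1 / p) * ∫ t in (0 : ℝ)..p, g t)) := by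
  set I := ∫ t in (0 : ℝ)..p, g t
  have hfloor : Tendsto (fun T : ℝ => (⌊T / p⌋ : ℝ) / T) atTop (𝓝 (1 / p)) := by
    refine (tendsto_nat_floor_mul_div_atTop (one_div_nonneg.2 hp.le)).congr' ?_
    filter_upwards [eventually_ge_atTop 0] with T hT
    rw [one_div_mul_eq_div, natCast_floor_eq_intCast_floor (div_nonneg hT hp.le)]
  have hbound (C : ℝ) :
      Tendsto (fun T : ℝ => (1 / T) * (C + ⌊T / p⌋ • I)) atTop (𝓝 ((1 / p) * I)) := by
    have h := (tendsto_inv_atTop_zero.const_mul C).add (hfloor.mul_const I)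
    rw [mul_zero, zero_add] at h
    refine h.congr fun T => ?_
    rw [zsmul_eq_mul]
    ring
  exact tendsto_of_tendsto_of_tendsto_of_le_of_le' (hbound _) (hbound _)
    (eventually_gt_atTop 0 |>.mono fun T hT => mul_le_mul_of_nonneg_left
      (hg.sInf_add_zsmul_le_integral_of_pos hint hp T) (one_div_pos.2 hT).le)
    (eventually_gt_atTop 0 |>.mono fun T hT => mul_le_mul_of_nonneg_left
      (hg.integral_le_sSup_add_zsmul_of_pos hint hp T) (one_div_pos.2 hT).le)

theorem integral_neg_to_self_const_mul_pow (a b : ℝ) (k : ℕ) :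
    ∫ z in -a..a, (b * z) ^ k = b ^ k * (1 + (-1) ^ k) * a ^ (k + 1) / (k + 1) := by
  simp only [mul_pow, intervalIntegral.integral_const_mul, integral_pow, neg_pow a, pow_succ]
  field_simp
  ring

section FloorRing

variable {R : Type*} [CommRing R] [LinearOrder R] [IsStrictOrderedRing R] [FloorRing R]

theorem isLeast_fract_neg (a : R) :
    IsLeast {t : R | 0 ≤ t ∧ ∃ n : ℤ, t + a = n} (fract (-a)) := by
  refine ⟨⟨fract_nonneg _, -⌊-a⌋, by rw [fract]; push_cast; ring⟩, ?_⟩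
  rintro t ⟨ht, n, hn⟩
  have : fract (-a) = fract t := by
    rw [show -a = t - n by rw [← hn]; ring, fract_sub_intCast]
  rw [this, fract, sub_le_self_iff]
  exact_mod_cast floor_nonneg.2 ht

theorem isLeast_fract (a : R) :
    IsLeast {t : R | 0 ≤ t ∧ ∃ n : ℤ, -t + a = n} (fract a) := by
  have hset :
      {t : R | 0 ≤ t ∧ ∃ n : ℤ, -t + a = n} = {t | 0 ≤ t ∧ ∃ n : ℤ, t + -a = n} := by
    ext t
    refine and_congr_right fun _ => ⟨fun ⟨n, hn⟩ => ⟨-n, ?_⟩, fun ⟨n, hn⟩ => ⟨-n, ?_⟩⟩ <;>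
      push_cast <;> linear_combination -hn
  simpa [hset] using isLeast_fract_neg (-a)

theorem abs_fract_sub_fract_eq_or (a b : R) :
    |fract a - fract b| = fract (a - b) ∨ |fract a - fract b| = 1 - fract (a - b) := by
  have hfract : fract (a - b) = fract (fract a - fract b) :=
    fract_eq_fract.2 ⟨⌊a⌋ - ⌊b⌋, by simp only [fract]; push_cast; ring⟩
  rcases le_or_gt (fract b) (fract a) with h | h
  · left
    have := fract_lt_one a
    have := fract_nonneg b
    rw [hfract, abs_of_nonneg (sub_nonneg.2 h), fract_eq_self.2 ⟨sub_nonneg.2 h, by linarith⟩]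
  · right
    have := fract_lt_one b
    have := fract_nonneg a
    have hz : fract (fract a - fract b) = fract a - fract b + 1 :=
      fract_eq_iff.2 ⟨by linarith, by linarith, -1, by push_cast; ring⟩
    rw [hfract, abs_of_neg (sub_neg.2 h), hz]
    ring

end FloorRing

noncomputable def doubleSawtooth (c u : ℝ) : ℝ := 1 - fract u - fract (u - c)

theorem doubleSawtooth_periodic (c : ℝ) : Periodic (doubleSawtooth c) 1 := fun u => by
  rw [doubleSawtooth, doubleSawtooth, fract_add_one, add_sub_right_comm, fract_add_one]

theorem doubleSawtooth_eqOn_Ioo_left {c : ℝ} (hc : c ≤ 1) :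
    EqOn (doubleSawtooth c) (fun u => c - 2 * u) (Ioo 0 c) := fun u ⟨hu0, huc⟩ => by
  have h₁ : fract u = u := fract_eq_self.2 ⟨hu0.le, by linarith⟩
  have h₂ : fract (u - c) = u - c + 1 :=
    fract_eq_iff.2 ⟨by linarith, by linarith, -1, by push_cast; ring⟩
  simp only [doubleSawtooth, h₁, h₂]
  ring

theorem doubleSawtooth_eqOn_Ioo_right {c : ℝ} (hc : 0 ≤ c) :
    EqOn (doubleSawtooth c) (fun u => 1 + c - 2 * u) (Ioo c 1) := fun u ⟨hcu, hu1⟩ => by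
  have h₁ : fract u = u := fract_eq_self.2 ⟨by linarith, hu1⟩
  have h₂ : fract (u - c) = u - c := fract_eq_self.2 ⟨by linarith, by linarith⟩
  simp only [doubleSawtooth, h₁, h₂]
  ring

section

variable {F : ℝ → ℝ} (hF : Continuous F) {c : ℝ} (hc₀ : 0 ≤ c) (hc₁ : c ≤ 1)
include hF hc₀ hc₁

theorem intervalIntegrable_comp_doubleSawtooth (a b : ℝ) :
    IntervalIntegrable (fun u => F (doubleSawtooth c u)) volume a b := by
  have hleft : IntervalIntegrable (fun u => F (doubleSawtooth c u)) volume 0 c :=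
    (by fun_prop : Continuous fun u => F (c - 2 * u)).intervalIntegrable 0 c |>.congr_uIoo <| by
      rw [uIoo_of_le hc₀]
      exact fun u hu => congrArg F (doubleSawtooth_eqOn_Ioo_left hc₁ hu).symm
  have hright : IntervalIntegrable (fun u => F (doubleSawtooth c u)) volume c 1 :=
    (by fun_prop : Continuous fun u => F (1 + c - 2 * u)).intervalIntegrable c 1 |>.congr_uIoo <| by
      rw [uIoo_of_le hc₁]
      exact fun u hu => congrArg F (doubleSawtooth_eqOn_Ioo_right hc₀ hu).symm
  exact ((doubleSawtooth_periodic c).comp F).intervalIntegrable₀ one_ne_zero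
    (hleft.trans hright) a b

theorem integral_comp_doubleSawtooth :
    ∫ u in (0 : ℝ)..1, F (doubleSawtooth c u) =
      ((∫ z in -c..c, F z) + ∫ z in -(1 - c)..(1 - c), F z) / 2 := by
  have hleft : ∫ u in (0 : ℝ)..c, F (doubleSawtooth c u) = (∫ z in -c..c, F z) / 2 := by
    rw [intervalIntegral.integral_congr_Ioo_of_le hc₀
        fun u hu => congrArg F (doubleSawtooth_eqOn_Ioo_left hc₁ hu),
      intervalIntegral.integral_comp_sub_mul _ two_ne_zero]
    simp only [smul_eq_mul]
    ring_nf
  have hright : ∫ u in c..1, F (doubleSawtooth c u) = (∫ z in -(1 - c)..(1 - c), F z) / 2 := by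
    rw [intervalIntegral.integral_congr_Ioo_of_le hc₁
        fun u hu => congrArg F (doubleSawtooth_eqOn_Ioo_right hc₀ hu),
      intervalIntegral.integral_comp_sub_mul _ two_ne_zero]
    simp only [smul_eq_mul]
    ring_nf
  have hint := intervalIntegrable_comp_doubleSawtooth hF hc₀ hc₁
  rw [← intervalIntegral.integral_add_adjacent_intervals (hint 0 c) (hint c 1), hleft, hright]
  ring

end

theorem floor_sub_ceil_eq_doubleSawtooth (t x : ℝ) :
    (⌊t + x⌋ : ℝ) - ⌈-t + x⌉ + 1 - 2 * t = doubleSawtooth (fract (2 * x)) (t + x) := by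
  have h : fract (t + x - fract (2 * x)) = fract (t - x) := by
    rw [show t + x - fract (2 * x) = t - x + ⌊2 * x⌋ by rw [fract]; ring, fract_add_intCast]
  rw [doubleSawtooth, h, show -t + x = -(t - x) by ring, ceil_neg]
  simp only [fract]
  push_cast
  ring

/-- With `Δ(t,x) = 4(⌊t+x⌋ − ⌈−t+x⌉ + 1 − 2t)`, `t₁₀` the smallest `t ≥ 0` with `t + x ∈ ℤ`,
`t₂₀` the smallest `t ≥ 0` with `−t + x ∈ ℤ` and `y = |t₂₀ − t₁₀|`, for every `k ∈ ℕ` the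
moment `(1/T)∫₀^T Δ(t,x)^k dt` converges to
`a_k = 4^k (1 + (−1)^k)(y^{k+1} + (1−y)^{k+1})/(2(k+1))` as `T → ∞`. -/
theorem moments_of_delta_tendsto (x : ℝ) (t₁₀ t₂₀ y : ℝ)
    (h₁ : IsLeast {t : ℝ | 0 ≤ t ∧ ∃ n : ℤ, t + x = (n : ℝ)} t₁₀)
    (h₂ : IsLeast {t : ℝ | 0 ≤ t ∧ ∃ n : ℤ, -t + x = (n : ℝ)} t₂₀)
    (hy : y = |t₂₀ - t₁₀|) (k : ℕ) :
    Tendsto (fun T : ℝ =>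
        (1 / T) * ∫ t in (0 : ℝ)..T,
          (4 * ((⌊t + x⌋ : ℝ) - (⌈-t + x⌉ : ℝ) + 1 - 2 * t)) ^ k) atTop
      (𝓝 ((4 : ℝ) ^ k * (1 + (-1 : ℝ) ^ k) * (y ^ (k + 1) + (1 - y) ^ (k + 1)) /
        (2 * ((k : ℝ) + 1)))) := by
  set c := fract (2 * x)
  have hc₀ : 0 ≤ c := fract_nonneg _
  have hc₁ : c ≤ 1 := (fract_lt_one _).le
  have hyc : y = c ∨ y = 1 - c := by
    rw [hy, h₁.unique (isLeast_fract_neg x), h₂.unique (isLeast_fract x),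
      show c = fract (x - -x) by rw [sub_neg_eq_add, ← two_mul]]
    exact abs_fract_sub_fract_eq_or x (-x)
  have hF : Continuous fun z : ℝ => (4 * z) ^ k := by fun_prop
  set g := fun u => (4 * doubleSawtooth c u) ^ k
  have hg : Periodic g 1 := (doubleSawtooth_periodic c).comp fun z => (4 * z) ^ k
  have hlim := (hg.add_const x).tendsto_average_intervalIntegral one_pos <| by
    simpa using (intervalIntegrable_comp_doubleSawtooth hF hc₀ hc₁ x (1 + x)).comp_add_right x
  have hmean : ∫ t in (0 : ℝ)..1, g (t + x) =
      (4 : ℝ) ^ k * (1 + (-1 : ℝ) ^ k) * (c ^ (k + 1) + (1 - c) ^ (k + 1)) /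
        (2 * ((k : ℝ) + 1)) := by
    rw [intervalIntegral.integral_comp_add_right g, zero_add, add_comm,
      hg.intervalIntegral_add_eq x 0, zero_add, integral_comp_doubleSawtooth hF hc₀ hc₁,
      integral_neg_to_self_const_mul_pow, integral_neg_to_self_const_mul_pow]
    field_simp
  convert hlim using 2
  · simp_rw [floor_sub_ceil_eq_doubleSawtooth]
    rfl
  · rw [hmean, div_one, one_mul]
    rcases hyc with rfl | rfl
    · rfl
    · rw [sub_sub_cancel, add_comm ((1 - c) ^ (k + 1))]
end

section
/- Let F : ℝ₊ → ℝ be measurable, and suppose there is a probability measure μ on ℝ such that for every bounded continuous g : ℝ → ℝ, (1/T)∫₀^T g(F(t)) dt → ∫ g dμ as T → ∞. Then for every probability density ρ on [0,1] and every bounded continuous g, (1/T)∫₀^T g(F(t)) ρ(t/T) dt → ∫ g dμ as T → ∞. -/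
open MeasureTheory Filter Real Topology BoundedContinuousFunction Set

/-!
Substituting `t = T u` turns the weighted average into `∫₀¹ φ_T(u) ρ(u) du` with
`φ_T(u) = g(F(T u))`, a family bounded by `‖g‖`. The hypothesis says that
`∫₀^a φ_T → a ∫ g dμ` for every `a`, i.e. `φ_T` tends weakly to the constant `∫ g dμ` when
tested against indicators of intervals. By uniform boundedness this extends to continuous
test functions (uniformly approximated by step functions) and then to all integrable `ρ`
(approximated in `L¹` by continuous functions).
-/

theorem tendsto_of_forall_approx {ι α : Type*} [PseudoMetricSpace α] {l : Filter ι}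
    {f : ι → α} {x : α} (K : ℝ)
    (h : ∀ ε > 0, ∃ g : ι → α, ∃ y, Tendsto g l (𝓝 y) ∧
      (∀ᶠ i in l, dist (f i) (g i) ≤ K * ε) ∧ dist y x ≤ K * ε) :
    Tendsto f l (𝓝 x) := by
  refine Metric.tendsto_nhds.2 fun ε hε => ?_
  set ε' := ε / (3 * (|K| + 1))
  have hKε' : K * ε' ≤ ε / 3 := by
    calc K * ε' ≤ (|K| + 1) * ε' := by gcongr; linarith [le_abs_self K]
      _ = ε / 3 := by simp only [ε']; field_simp
  obtain ⟨g, y, hgy, hfg, hyx⟩ := h ε' (by positivity)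
  filter_upwards [hfg, Metric.tendsto_nhds.1 hgy (ε / 3) (by positivity)] with i hfg hgy
  calc dist (f i) x ≤ dist (f i) (g i) + dist (g i) y + dist y x := dist_triangle4 _ _ _ _
    _ < ε := by linarith

theorem abs_integral_mul_sub_mul_integral_le {φ r : ℝ → ℝ} {a b C δ : ℝ} (hab : a ≤ b)
    (hφ : IntervalIntegrable φ volume a b) (hr : ContinuousOn r (Icc a b))
    (hφC : ∀ u, |φ u| ≤ C) (hrδ : ∀ u ∈ Icc a b, |r u - r a| ≤ δ) :
    |(∫ u in a..b, φ u * r u) - r a * ∫ u in a..b, φ u| ≤ C * δ * (b - a) := by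
  have hφr : IntervalIntegrable (fun u => φ u * r u) volume a b :=
    hφ.mul_continuousOn (by rwa [uIcc_of_le hab])
  rw [← intervalIntegral.integral_const_mul,
    ← intervalIntegral.integral_sub hφr (hφ.const_mul _), ← Real.norm_eq_abs]
  refine (intervalIntegral.norm_integral_le_of_norm_le_const fun u hu => ?_).trans_eq
    (by rw [abs_of_nonneg (sub_nonneg.2 hab)])
  rw [uIoc_of_le hab] at hu
  rw [Real.norm_eq_abs, show φ u * r u - r a * φ u = φ u * (r u - r a) by ring, abs_mul]
  exact mul_le_mul (hφC u) (hrδ u (Ioc_subset_Icc_self hu)) (abs_nonneg _)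
    ((abs_nonneg _).trans (hφC u))

theorem abs_integral_mul_sub_sum_le {φ r : ℝ → ℝ} {C δ : ℝ} {n : ℕ} (hn : 0 < n)
    (hφ : IntervalIntegrable φ volume 0 1) (hr : ContinuousOn r (Icc 0 1))
    (hφC : ∀ u, |φ u| ≤ C)
    (hrδ : ∀ u ∈ Icc (0 : ℝ) 1, ∀ v ∈ Icc (0 : ℝ) 1, |u - v| ≤ 1 / n → |r u - r v| ≤ δ) :
    |(∫ u in (0 : ℝ)..1, φ u * r u) -
      ∑ j ∈ Finset.range n, r (j / n) * ∫ u in (j / n : ℝ)..(j + 1) / n, φ u| ≤ C * δ := by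
  have hn' : (0 : ℝ) < n := Nat.cast_pos.2 hn
  have hle : ∀ j : ℕ, (j : ℝ) / n ≤ (j + 1) / n := fun j => by gcongr; linarith
  have hsub : ∀ j ∈ Finset.range n, Icc ((j : ℝ) / n) ((j + 1) / n) ⊆ Icc 0 1 := by
    intro j hj
    have : (j : ℝ) + 1 ≤ n := by exact_mod_cast Finset.mem_range.1 hj
    exact Icc_subset_Icc (by positivity) ((div_le_one hn').2 this)
  have hφsub : ∀ j ∈ Finset.range n, IntervalIntegrable φ volume (j / n) ((j + 1) / n) :=
    fun j hj => hφ.mono_set (by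
      rw [uIcc_of_le (hle j), uIcc_of_le zero_le_one]; exact hsub j hj)
  have hsplit : (∫ u in (0 : ℝ)..1, φ u * r u) =
      ∑ j ∈ Finset.range n, ∫ u in (j / n : ℝ)..(j + 1) / n, φ u * r u := by
    have := intervalIntegral.sum_integral_adjacent_intervals (a := fun j : ℕ => (j : ℝ) / n)
      (μ := volume) (f := fun u => φ u * r u) (n := n) fun j hj => ?_
    · simpa [div_self hn'.ne'] using this.symm
    · push_cast
      exact (hφsub j (Finset.mem_range.2 hj)).mul_continuousOn
        (hr.mono (by simpa [uIcc_of_le (hle j)] using hsub j (Finset.mem_range.2 hj)))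
  rw [hsplit, ← Finset.sum_sub_distrib]
  refine (Finset.abs_sum_le_sum_abs _ _).trans ?_
  calc _ ≤ ∑ j ∈ Finset.range n, C * δ * ((j + 1) / n - j / n) := by
        refine Finset.sum_le_sum fun j hj => ?_
        refine abs_integral_mul_sub_mul_integral_le (hle j)
          (hφsub j hj) (hr.mono (hsub j hj)) hφC
          fun u hu => hrδ u (hsub j hj hu) _ (hsub j hj (left_mem_Icc.2 (hle j))) ?_
        rw [abs_of_nonneg (sub_nonneg.2 hu.1)]
        linarith [hu.2, show ((j : ℝ) + 1) / n = j / n + 1 / n by ring]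
    _ = C * δ := by
        simp only [show ∀ j : ℕ, ((j : ℝ) + 1) / n - j / n = 1 / n from fun j => by ring,
          Finset.sum_const, Finset.card_range, nsmul_eq_mul]
        field_simp

theorem abs_integral_mul_le_mul_integral_abs {φ f : ℝ → ℝ} {a b C : ℝ} (hab : a ≤ b)
    (hf : IntervalIntegrable f volume a b) (hφC : ∀ u, |φ u| ≤ C) :
    |∫ u in a..b, φ u * f u| ≤ C * ∫ u in a..b, |f u| := by
  rw [← intervalIntegral.integral_const_mul, ← Real.norm_eq_abs]
  refine intervalIntegral.norm_integral_le_of_norm_le hab (ae_of_all _ fun u _ => ?_)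
    (hf.abs.const_mul C)
  rw [Real.norm_eq_abs, abs_mul]
  exact mul_le_mul_of_nonneg_right (hφC u) (abs_nonneg _)

theorem IntervalIntegrable.exists_continuous_integral_abs_sub_le {f : ℝ → ℝ} {a b ε : ℝ}
    (hab : a ≤ b) (hf : IntervalIntegrable f volume a b) (hε : 0 < ε) :
    ∃ g : ℝ → ℝ, Continuous g ∧ ∫ u in a..b, |f u - g u| ≤ ε := by
  have hfi : Integrable ((Ioc a b).indicator f) := hf.1.integrable_indicator measurableSet_Ioc
  obtain ⟨g, -, hfg, hg, hgi⟩ := hfi.exists_hasCompactSupport_integral_sub_le hε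
  refine ⟨g, hg, ?_⟩
  calc ∫ u in a..b, |f u - g u|
      = ∫ u in Ioc a b, ‖(Ioc a b).indicator f u - g u‖ := by
        rw [intervalIntegral.integral_of_le hab]
        refine setIntegral_congr_fun measurableSet_Ioc fun u hu => ?_
        rw [indicator_of_mem hu, Real.norm_eq_abs]
    _ ≤ ∫ u, ‖(Ioc a b).indicator f u - g u‖ :=
        setIntegral_le_integral (hfi.sub hgi).norm (ae_of_all _ fun _ => norm_nonneg _)
    _ ≤ ε := hfg

theorem tendsto_integral_comp_mul_of_tendsto_average {f : ℝ → ℝ} {L a : ℝ}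
    (h : Tendsto (fun T : ℝ => (1 / T) * ∫ t in (0 : ℝ)..T, f t) atTop (𝓝 L)) (ha : 0 ≤ a) :
    Tendsto (fun T : ℝ => ∫ u in (0 : ℝ)..a, f (T * u)) atTop (𝓝 (a * L)) := by
  rcases ha.eq_or_lt with rfl | ha
  · simp
  refine ((h.comp (tendsto_id.atTop_mul_const ha)).const_mul a).congr' ?_
  filter_upwards [eventually_gt_atTop 0] with T hT
  rw [intervalIntegral.integral_comp_mul_left _ hT.ne']
  simp only [Function.comp_apply, id, mul_zero, smul_eq_mul]
  field_simp

section WeakLimit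

variable {ι : Type*} {l : Filter ι} {φ : ι → ℝ → ℝ} {C I : ℝ}

theorem tendsto_integral_mul_of_continuousOn (hφ : ∀ i, IntervalIntegrable (φ i) volume 0 1)
    (hφC : ∀ i u, |φ i u| ≤ C)
    (hA : ∀ a ∈ Icc (0 : ℝ) 1, Tendsto (fun i => ∫ u in (0 : ℝ)..a, φ i u) l (𝓝 (a * I)))
    {r : ℝ → ℝ} (hr : ContinuousOn r (Icc 0 1)) :
    Tendsto (fun i => ∫ u in (0 : ℝ)..1, φ i u * r u) l
      (𝓝 ((∫ u in (0 : ℝ)..1, r u) * I)) := by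
  refine tendsto_of_forall_approx (|C| + |I|) fun δ hδ => ?_
  obtain ⟨η, hη, hrη⟩ := Metric.uniformContinuousOn_iff_le.1
    (isCompact_Icc.uniformContinuousOn_of_continuous hr) δ hδ
  obtain ⟨n, hn, hnη⟩ : ∃ n : ℕ, 0 < n ∧ 1 / (n : ℝ) < η := by
    obtain ⟨n, hn⟩ := exists_nat_one_div_lt hη
    exact ⟨n + 1, n.succ_pos, by exact_mod_cast hn⟩
  have hrδ : ∀ u ∈ Icc (0 : ℝ) 1, ∀ v ∈ Icc (0 : ℝ) 1, |u - v| ≤ 1 / n → |r u - r v| ≤ δ :=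
    fun u hu v hv huv => hrη u hu v hv (by rw [Real.dist_eq]; linarith)
  have hx : ∀ j ≤ n, (j : ℝ) / n ∈ Icc (0 : ℝ) 1 := fun j hj =>
    ⟨by positivity, div_le_one_of_le₀ (by exact_mod_cast hj) n.cast_nonneg⟩
  refine ⟨fun i => ∑ j ∈ Finset.range n, r (j / n) * ∫ u in (j / n : ℝ)..(j + 1) / n, φ i u,
    (∑ j ∈ Finset.range n, r (j / n) * ∫ _ in (j / n : ℝ)..(j + 1) / n, (1 : ℝ)) * I,
    ?_, ?_, ?_⟩
  · rw [Finset.sum_mul]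
    refine tendsto_finsetSum _ fun j hj => ?_
    have hj := Finset.mem_range.1 hj
    have hlo := hx j hj.le
    have hhi : ((j : ℝ) + 1) / n ∈ Icc (0 : ℝ) 1 := by exact_mod_cast hx (j + 1) hj
    simp only [intervalIntegral.integral_const, smul_eq_mul, mul_one, mul_assoc, sub_mul]
    refine (((hA _ hhi).sub (hA _ hlo)).const_mul _).congr fun i => ?_
    have hφ0 : ∀ a ∈ Icc (0 : ℝ) 1, IntervalIntegrable (φ i) volume 0 a := fun a ha =>
      (hφ i).mono_set (uIcc_subset_uIcc left_mem_uIcc (by rwa [uIcc_of_le zero_le_one]))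
    rw [intervalIntegral.integral_interval_sub_left (hφ0 _ hhi) (hφ0 _ hlo)]
  · refine Eventually.of_forall fun i => ?_
    rw [Real.dist_eq]
    refine (abs_integral_mul_sub_sum_le hn (hφ i) hr (hφC i) hrδ).trans ?_
    gcongr
    linarith [le_abs_self C, abs_nonneg I]
  · rw [Real.dist_eq, ← sub_mul, abs_mul, abs_sub_comm]
    have := abs_integral_mul_sub_sum_le (φ := fun _ => 1) hn intervalIntegrable_const hr
      (fun _ => abs_one.le) hrδ
    simp only [one_mul] at this
    calc _ ≤ δ * |I| := by gcongr
      _ ≤ (|C| + |I|) * δ := by nlinarith [abs_nonneg C]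

theorem tendsto_integral_mul_of_intervalIntegrable
    (hφ : ∀ i, IntervalIntegrable (φ i) volume 0 1) (hφC : ∀ i u, |φ i u| ≤ C)
    (hA : ∀ a ∈ Icc (0 : ℝ) 1, Tendsto (fun i => ∫ u in (0 : ℝ)..a, φ i u) l (𝓝 (a * I)))
    {ρ : ℝ → ℝ} (hρ : IntervalIntegrable ρ volume 0 1) :
    Tendsto (fun i => ∫ u in (0 : ℝ)..1, φ i u * ρ u) l
      (𝓝 ((∫ u in (0 : ℝ)..1, ρ u) * I)) := by
  refine tendsto_of_forall_approx (|C| + |I|) fun δ hδ => ?_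
  obtain ⟨r, hr, hρr⟩ := hρ.exists_continuous_integral_abs_sub_le zero_le_one hδ
  have hrint : IntervalIntegrable r volume 0 1 := hr.intervalIntegrable 0 1
  refine ⟨fun i => ∫ u in (0 : ℝ)..1, φ i u * r u, (∫ u in (0 : ℝ)..1, r u) * I,
    tendsto_integral_mul_of_continuousOn hφ hφC hA hr.continuousOn, ?_, ?_⟩
  · refine Eventually.of_forall fun i => ?_
    have hφρ : IntervalIntegrable (fun u => φ i u * ρ u) volume 0 1 :=
      (intervalIntegrable_iff_integrableOn_Ioc_of_le zero_le_one).2 <|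
        hρ.1.bdd_mul (hφ i).1.aestronglyMeasurable
          (ae_of_all _ fun u => (Real.norm_eq_abs _).symm ▸ hφC i u)
    rw [Real.dist_eq, ← intervalIntegral.integral_sub hφρ
      ((hφ i).mul_continuousOn hr.continuousOn)]
    calc _ = |∫ u in (0 : ℝ)..1, φ i u * (ρ u - r u)| := by simp only [mul_sub]
      _ ≤ C * δ := (abs_integral_mul_le_mul_integral_abs zero_le_one (hρ.sub hrint) (hφC i)).trans
          (by gcongr; exact (abs_nonneg _).trans (hφC i 0))
      _ ≤ (|C| + |I|) * δ := by gcongr; linarith [le_abs_self C, abs_nonneg I]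
  · rw [Real.dist_eq, ← sub_mul, abs_mul, abs_sub_comm, ← intervalIntegral.integral_sub hρ hrint]
    calc _ ≤ δ * |I| := by
          gcongr
          exact (intervalIntegral.abs_integral_le_integral_abs zero_le_one).trans hρr
      _ ≤ (|C| + |I|) * δ := by nlinarith [abs_nonneg C]

end WeakLimit

theorem density_limit_transfer_general (F : ℝ → ℝ) (hF : Measurable F)
    (μ : Measure ℝ)
    (h : ∀ g : ℝ →ᵇ ℝ,
      Tendsto (fun T : ℝ => (1 / T) * ∫ t in (0 : ℝ)..T, g (F t)) atTop
        (𝓝 (∫ x, g x ∂μ))) :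
    ∀ ρ : ℝ → ℝ, (∀ u, 0 ≤ ρ u) → IntegrableOn ρ (Set.Icc (0 : ℝ) 1) →
      (∫ u in (0 : ℝ)..1, ρ u) = 1 →
      ∀ g : ℝ →ᵇ ℝ,
        Tendsto (fun T : ℝ => (1 / T) * ∫ t in (0 : ℝ)..T, g (F t) * ρ (t / T)) atTop
          (𝓝 (∫ x, g x ∂μ)) := by
  intro ρ _ hρ hρ1 g
  have hgF : ∀ T, IntervalIntegrable (fun u => g (F (T * u))) volume 0 1 := fun T =>
    intervalIntegrable_const.mono_fun'
      (g.continuous.measurable.comp (hF.comp (measurable_const_mul T))).aestronglyMeasurable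
      (ae_of_all _ fun _ => g.norm_coe_le_norm _)
  have key := tendsto_integral_mul_of_intervalIntegrable hgF
    (fun T u => (Real.norm_eq_abs _) ▸ g.norm_coe_le_norm (F (T * u)))
    (fun a ha => tendsto_integral_comp_mul_of_tendsto_average (h g) ha.1)
    ((intervalIntegrable_iff_integrableOn_Icc_of_le zero_le_one).2 hρ)
  rw [hρ1, one_mul] at key
  refine key.congr' ?_
  filter_upwards [eventually_gt_atTop 0] with T hT
  have hsubst : ∀ u, g (F (T * u)) * ρ u = g (F (T * u)) * ρ (T * u / T) := fun u => by
    rw [mul_div_cancel_left₀ _ hT.ne']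
  simp only [hsubst,
    intervalIntegral.integral_comp_mul_left (fun t => g (F t) * ρ (t / T)) hT.ne', mul_zero,
    mul_one, smul_eq_mul, one_div]

/-- If `(1/T)∫₀^T g(F(t)) dt → ∫ g dμ` for every bounded continuous `g`, then for every
probability density `ρ` on `[0,1]` and every bounded continuous `g`,
`(1/T)∫₀^T g(F(t)) ρ(t/T) dt → ∫ g dμ`. -/
theorem density_limit_transfer (F : ℝ → ℝ) (hF : Measurable F)
    (μ : Measure ℝ) [IsProbabilityMeasure μ]
    (h : ∀ g : ℝ →ᵇ ℝ,
      Tendsto (fun T : ℝ => (1 / T) * ∫ t in (0 : ℝ)..T, g (F t)) atTop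
        (𝓝 (∫ x, g x ∂μ))) :
    ∀ ρ : ℝ → ℝ, (∀ u, 0 ≤ ρ u) → IntegrableOn ρ (Set.Icc (0 : ℝ) 1) →
      (∫ u in (0 : ℝ)..1, ρ u) = 1 →
      ∀ g : ℝ →ᵇ ℝ,
        Tendsto (fun T : ℝ => (1 / T) * ∫ t in (0 : ℝ)..T, g (F t) * ρ (t / T)) atTop
          (𝓝 (∫ x, g x ∂μ)) :=
  density_limit_transfer_general F hF μ h
end
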